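/- arXiv:1810.12449 — 11 statements merged into one kernel-verified Lean document; each statement's English description precedes it below -/
import Mathlib

section
/- Let G be the free group on two generators x and y, and k a field. Then the k-subalgebra of the group algebra k[G] generated by x + x^{-1} and y + y^{-1} is the free k-algebra on the two generators x + x^{-1} and y + y^{-1}. -/
/-!
Expanding a product `(x_{i₁} + x_{i₁}⁻¹) ⋯ (x_{iₙ} + x_{iₙ}⁻¹)` gives a sum of group elements of
word length at most `n`, and among them the positive word `x_{i₁} ⋯ x_{iₙ}` occurs exactly once,
while it does not occur at all in the expansion of any other product of length at most `n`. Hence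
the image of a nonzero noncommutative polynomial has, at the positive word of one of its longest
monomials, the coefficient of that monomial.
-/

namespace FreeGroup

variable {α : Type*}

theorem isReduced_map_true (L : List α) : IsReduced (L.map fun i => (i, true)) := by
  simpa [IsReduced, List.isChain_map] using List.isChain_iff_getElem.2 fun _ _ => trivial

variable [DecidableEq α]

theorem norm_mk_of_isReduced {L : List (α × Bool)} (h : IsReduced L) :
    (mk L).norm = L.length := by
  rw [FreeGroup.norm, toWord_mk, h.reduce_eq]

theorem norm_le_norm_mul_add_one {a : FreeGroup α} (ha : a.norm = 1) (g : FreeGroup α) :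
    g.norm ≤ (a * g).norm + 1 :=
  calc g.norm = (a⁻¹ * (a * g)).norm := by rw [inv_mul_cancel_left]
    _ ≤ a⁻¹.norm + (a * g).norm := norm_mul_le _ _
    _ = (a * g).norm + 1 := by rw [norm_inv_eq, ha, add_comm]

end FreeGroup

namespace FreeMonoid

variable {α : Type*}

def toFreeGroup : FreeMonoid α →* FreeGroup α := lift FreeGroup.of

@[simp]
theorem toFreeGroup_of (i : α) : toFreeGroup (of i) = FreeGroup.of i := rfl

theorem toFreeGroup_eq_mk (w : FreeMonoid α) :
    toFreeGroup w = FreeGroup.mk (w.toList.map fun i => (i, true)) := by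
  induction w using FreeMonoid.inductionOn' with
  | one => rfl
  | of_mul i w ih =>
    rw [_root_.map_mul, ih, toFreeGroup, lift_eval_of, toList_of_mul, List.map_cons,
      FreeGroup.of, FreeGroup.mul_mk, List.singleton_append]

variable [DecidableEq α]

theorem norm_toFreeGroup (w : FreeMonoid α) : (toFreeGroup w).norm = w.length := by
  rw [toFreeGroup_eq_mk, FreeGroup.norm_mk_of_isReduced (FreeGroup.isReduced_map_true _),
    List.length_map, length]

theorem norm_inv_of_mul_toFreeGroup {i j : α} (hij : i ≠ j) (w : FreeMonoid α) :
    ((FreeGroup.of i)⁻¹ * toFreeGroup (of j * w)).norm = w.length + 2 := by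
  have hred : FreeGroup.IsReduced ((i, false) :: (j, true) :: w.toList.map fun i => (i, true)) :=
    FreeGroup.isReduced_cons_cons.2
      ⟨fun h => absurd h hij, by simpa using FreeGroup.isReduced_map_true (j :: w.toList)⟩
  have hmk : (FreeGroup.of i)⁻¹ * toFreeGroup (of j * w) =
      FreeGroup.mk ((i, false) :: (j, true) :: w.toList.map fun i => (i, true)) := by
    rw [toFreeGroup_eq_mk, FreeGroup.of, FreeGroup.inv_mk, FreeGroup.mul_mk]
    rfl
  rw [hmk, FreeGroup.norm_mk_of_isReduced hred]
  simp [length]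

end FreeMonoid

namespace FreeGroup

variable (k : Type*) [CommRing k] {α : Type*}

noncomputable def symmGen (i : α) : MonoidAlgebra k (FreeGroup α) :=
  .of k _ (of i) + .of k _ (of i)⁻¹

variable {k}

theorem coeff_symmGen_mul (i : α) (x : MonoidAlgebra k (FreeGroup α)) (g : FreeGroup α) :
    (symmGen k i * x).coeff g = x.coeff ((of i)⁻¹ * g) + x.coeff (of i * g) := by
  simp [symmGen, add_mul, MonoidAlgebra.coeff_add]

variable [DecidableEq α]

theorem coeff_lift_symmGen_eq_zero {w : FreeMonoid α} {g : FreeGroup α}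
    (h : w.length < g.norm) : (FreeMonoid.lift (symmGen k) w).coeff g = 0 := by
  induction w using FreeMonoid.inductionOn' generalizing g with
  | one =>
    rw [_root_.map_one, MonoidAlgebra.one_def, MonoidAlgebra.coeff_single,
      Finsupp.single_eq_of_ne (by rintro rfl; simp at h)]
  | of_mul i w ih =>
    rw [FreeMonoid.length_mul, FreeMonoid.length_of] at h
    rw [_root_.map_mul, FreeMonoid.lift_eval_of, coeff_symmGen_mul, ih, ih, add_zero]
    · have := norm_le_norm_mul_add_one (norm_of i) g
      omega
    · have := norm_le_norm_mul_add_one (a := (of i)⁻¹) (by rw [norm_inv_eq, norm_of]) g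
      omega

theorem coeff_lift_symmGen_of_mul_toFreeGroup_of_mul {w v : FreeMonoid α}
    (h : w.length = v.length) (i j : α) :
    (FreeMonoid.lift (symmGen k) (.of i * w)).coeff (FreeMonoid.of j * v).toFreeGroup =
      if i = j then (FreeMonoid.lift (symmGen k) w).coeff v.toFreeGroup else 0 := by
  have hpos : (FreeMonoid.lift (symmGen k) w).coeff (of i * (.of j * v).toFreeGroup) = 0 := by
    apply coeff_lift_symmGen_eq_zero
    rw [← FreeMonoid.toFreeGroup_of, ← _root_.map_mul, FreeMonoid.norm_toFreeGroup]
    simp only [FreeMonoid.length_mul, FreeMonoid.length_of, h]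
    omega
  rw [_root_.map_mul, FreeMonoid.lift_eval_of, coeff_symmGen_mul, hpos, add_zero]
  split_ifs with hij
  · rw [hij, _root_.map_mul FreeMonoid.toFreeGroup, FreeMonoid.toFreeGroup_of, inv_mul_cancel_left]
  · apply coeff_lift_symmGen_eq_zero
    rw [FreeMonoid.norm_inv_of_mul_toFreeGroup hij]
    omega

theorem coeff_lift_symmGen_toFreeGroup_self (w : FreeMonoid α) :
    (FreeMonoid.lift (symmGen k) w).coeff w.toFreeGroup = 1 := by
  induction w using FreeMonoid.inductionOn' with
  | one => exact MonoidAlgebra.coeff_one_one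
  | of_mul i w ih => rw [coeff_lift_symmGen_of_mul_toFreeGroup_of_mul rfl, if_pos rfl, ih]

theorem coeff_lift_symmGen_toFreeGroup_eq_zero {w v : FreeMonoid α} (hne : w ≠ v)
    (hlen : w.length ≤ v.length) :
    (FreeMonoid.lift (symmGen k) w).coeff v.toFreeGroup = 0 := by
  rcases hlen.lt_or_eq with hlt | heq
  · exact coeff_lift_symmGen_eq_zero (by rwa [FreeMonoid.norm_toFreeGroup])
  induction w using FreeMonoid.inductionOn' generalizing v with
  | one => exact absurd (FreeMonoid.length_eq_zero.1 heq.symm).symm hne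
  | of_mul i w ih =>
    cases v using FreeMonoid.casesOn with
    | one => simp at heq
    | of_mul j v =>
      have hlen' : w.length = v.length := by simpa using heq
      rw [coeff_lift_symmGen_of_mul_toFreeGroup_of_mul hlen']
      split_ifs with hij
      · exact ih (fun e => hne (by rw [hij, e])) hlen'.le hlen'
      · rfl

theorem injective_lift_lift_symmGen :
    Function.Injective (MonoidAlgebra.lift k (MonoidAlgebra k (FreeGroup α)) (FreeMonoid α)
      (FreeMonoid.lift (symmGen k))) := by
  rw [injective_iff_map_eq_zero]
  intro p hp
  by_contra hne
  obtain ⟨w₀, hw₀, hmax⟩ := p.coeff.support.exists_max_image FreeMonoid.length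
    (Finsupp.support_nonempty_iff.2 (mt MonoidAlgebra.coeff_eq_zero.1 hne))
  have hlead : (MonoidAlgebra.lift k _ _ (FreeMonoid.lift (symmGen k)) p).coeff w₀.toFreeGroup =
      p.coeff w₀ := by
    rw [MonoidAlgebra.lift_apply, MonoidAlgebra.coeff_finsuppSum, Finsupp.sum_apply,
      Finsupp.sum_eq_single w₀, MonoidAlgebra.coeff_smul_apply,
      coeff_lift_symmGen_toFreeGroup_self, smul_eq_mul, mul_one]
    · intro w hw hww₀
      rw [MonoidAlgebra.coeff_smul_apply, smul_eq_mul,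
        coeff_lift_symmGen_toFreeGroup_eq_zero hww₀ (hmax w (Finsupp.mem_support_iff.2 hw)),
        mul_zero]
    · simp
  rw [hp] at hlead
  exact Finsupp.mem_support_iff.1 hw₀ hlead.symm

end FreeGroup

/-- Let `G` be the free group on two generators `x, y` and `k` a field.
The `k`-subalgebra of the group algebra `k[G]` generated by `x + x⁻¹` and `y + y⁻¹`
is the free `k`-algebra on these two generators; i.e. the canonical algebra map from
the free associative `k`-algebra on two generators sending them to `x + x⁻¹` and
`y + y⁻¹` is injective. -/
theorem free_algebra_on_symmetric_elements_of_free_group_algebra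
    (k : Type) [Field k] :
    Function.Injective
      (FreeAlgebra.lift k (fun i : Fin 2 =>
        MonoidAlgebra.of k (FreeGroup (Fin 2)) (FreeGroup.of i) +
        MonoidAlgebra.of k (FreeGroup (Fin 2)) (FreeGroup.of i)⁻¹)) := by
  have hfactor : FreeAlgebra.lift k (FreeGroup.symmGen k) =
      (MonoidAlgebra.lift k _ _ (FreeMonoid.lift (FreeGroup.symmGen k))).comp
        (FreeAlgebra.equivMonoidAlgebraFreeMonoid (R := k) (X := Fin 2)).toAlgHom := by
    ext i
    simp [FreeAlgebra.equivMonoidAlgebraFreeMonoid]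
  change Function.Injective (FreeAlgebra.lift k (FreeGroup.symmGen k))
  rw [hfactor, AlgHom.coe_comp]
  exact FreeGroup.injective_lift_lift_symmGen.comp
    FreeAlgebra.equivMonoidAlgebraFreeMonoid.injective
end

section
/- Let R be a ring with a descending G-filtration over an ordered group (G,<), and let Rees(R) = ⊕_{g∈G} (F_g R)·g ⊆ R[G] be the Rees ring. Let J be the ideal of Rees(R) generated by the elements g with g < 1. Then J = ⊕_{g∈G} (F_{>g} R)·g and Rees(R)/J is isomorphic as a G-graded ring to the associated graded ring gr(R). -/
/-- An abstract characterization of the associated graded ring `gr(R) = ⊕_g F g / F_{>g}`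
of a descending `G`-filtration `F` of `R`:  a ring `A` together with maps
`φ g : F g → A` (given as `φ : G → R → A`, meaningful on `F g`) sending `x ∈ F g` to its
class in the degree-`g` component, so that `φ g x = 0` iff `x ∈ F_{>g} = Σ_{h>g} F h`,
multiplication of components is induced by that of `R`, the images of the `φ g` generate
`A` additively, and components of distinct degrees are independent. -/
structure IsAssociatedGradedRing (R : Type) [Ring R] (G : Type) [Group G] [LinearOrder G]
    (F : G → Set R) (A : Type) [Ring A] (φ : G → R → A) : Prop where
  map_add : ∀ g : G, ∀ x y : R, x ∈ F g → y ∈ F g → φ g (x + y) = φ g x + φ g y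
  zero_iff : ∀ g : G, ∀ x : R, x ∈ F g → (φ g x = 0 ↔ (x = 0 ∨ ∃ h > g, x ∈ F h))
  map_mul : ∀ g h : G, ∀ x y : R, x ∈ F g → y ∈ F h → φ g x * φ h y = φ (g * h) (x * y)
  map_one : φ 1 1 = 1
  gen : AddSubgroup.closure (⋃ g : G, φ g '' F g) = (⊤ : AddSubgroup A)
  indep : ∀ (s : Finset G) (c : G → R), (∀ g ∈ s, c g ∈ F g) →
    (∑ g ∈ s, φ g (c g)) = 0 → ∀ g ∈ s, φ g (c g) = 0
/-!
The coefficientwise condition `x_g ∈ F_{>g}` cuts out a two-sided ideal of the Rees ring,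
because the order is bi-invariant and so `F_a F_{>b} ⊆ F_{>ab}` and `F_{>a} F_b ⊆ F_{>ab}`.
It contains the generators `g < 1` (as `1 ∈ F_1 ⊆ F_{>g}`), and conversely each monomial `r·g`
with `r ∈ F_h`, `h > g` factors as `(r·h)(1·h⁻¹g)` with `h⁻¹g < 1`; so this ideal is `J`.
The map `Σ x_g g ↦ Σ φ_g(x_g)` is a ring homomorphism from the Rees ring onto `gr R`, and
independence of the graded components together with `φ_g x = 0 ↔ x ∈ F_{>g}` shows that its
kernel is `J`.
-/
section Filtration

variable {R G : Type} [Ring R] [Group G] [LinearOrder G]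

structure IsDescendingFiltration (F : G → Set R) : Prop where
  zero_mem : ∀ g, (0 : R) ∈ F g
  add_mem : ∀ {g x y}, x ∈ F g → y ∈ F g → x + y ∈ F g
  neg_mem : ∀ {g x}, x ∈ F g → -x ∈ F g
  antitone : Antitone F
  mul_mem : ∀ {g h x y}, x ∈ F g → y ∈ F h → x * y ∈ F (g * h)
  one_mem : (1 : R) ∈ F 1

theorem MonoidAlgebra.coeff_single_mem {S M σ : Type*} [Semiring S] [SetLike σ S]
    [AddSubmonoidClass σ S] {T : M → σ} {g : M} {r : S} (hr : r ∈ T g) (m : M) :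
    (MonoidAlgebra.single g r).coeff m ∈ T m := by
  classical
  rw [MonoidAlgebra.coeff_single, Finsupp.single_apply]
  split_ifs with hgm
  · exact hgm ▸ hr
  · exact zero_mem _

theorem MonoidAlgebra.coeff_mul_mem {S M σ : Type*} [Semiring S] [Mul M] [SetLike σ S]
    [AddSubmonoidClass σ S] {T : M → σ} {x y : MonoidAlgebra S M}
    (h : ∀ a b, x.coeff a * y.coeff b ∈ T (a * b)) (m : M) : (x * y).coeff m ∈ T m := by
  classical
  rw [MonoidAlgebra.coeff_mul]
  refine sum_mem fun a _ => sum_mem fun b _ => ?_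
  beta_reduce
  split_ifs with hab
  · exact hab ▸ h a b
  · exact zero_mem _

namespace IsDescendingFiltration

variable {F : G → Set R} (hF : IsDescendingFiltration F)

def addSubgroup (g : G) : AddSubgroup R where
  carrier := F g
  zero_mem' := hF.zero_mem g
  add_mem' := hF.add_mem
  neg_mem' := hF.neg_mem

/-- `F_{>g} = Σ_{h > g} F h`: since the `F h` form a chain, the sum is their union
(and `0` when nothing lies above `g`). -/
def strict (g : G) : AddSubgroup R where
  carrier := {r | r = 0 ∨ ∃ h > g, r ∈ F h}
  zero_mem' := Or.inl rfl
  add_mem' := by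
    rintro r s (rfl | ⟨h₁, hg₁, hr⟩) (rfl | ⟨h₂, hg₂, hs⟩)
    · exact Or.inl (add_zero 0)
    · exact Or.inr ⟨h₂, hg₂, by rwa [zero_add]⟩
    · exact Or.inr ⟨h₁, hg₁, by rwa [add_zero]⟩
    · exact Or.inr ⟨min h₁ h₂, lt_min hg₁ hg₂,
        hF.add_mem (hF.antitone (min_le_left _ _) hr) (hF.antitone (min_le_right _ _) hs)⟩
  neg_mem' := by
    rintro r (rfl | ⟨h, hg, hr⟩)
    · exact Or.inl neg_zero
    · exact Or.inr ⟨h, hg, hF.neg_mem hr⟩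

theorem strict_le (g : G) : hF.strict g ≤ hF.addSubgroup g := by
  rintro r (rfl | ⟨h, hg, hr⟩)
  · exact hF.zero_mem g
  · exact hF.antitone hg.le hr

theorem mul_mem_strict_of_right [MulLeftStrictMono G] {a b : G} {x y : R} (hx : x ∈ F a)
    (hy : y ∈ hF.strict b) : x * y ∈ hF.strict (a * b) := by
  rcases hy with rfl | ⟨h, hb, hy⟩
  · exact Or.inl (mul_zero x)
  · exact Or.inr ⟨a * h, mul_lt_mul_right hb a, hF.mul_mem hx hy⟩

theorem mul_mem_strict_of_left [MulRightStrictMono G] {a b : G} {x y : R}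
    (hx : x ∈ hF.strict a) (hy : y ∈ F b) : x * y ∈ hF.strict (a * b) := by
  rcases hx with rfl | ⟨h, ha, hx⟩
  · exact Or.inl (zero_mul y)
  · exact Or.inr ⟨h * b, mul_lt_mul_left ha b, hF.mul_mem hx hy⟩

def reesRing : Subring (MonoidAlgebra R G) where
  carrier := {f | ∀ g, f.coeff g ∈ hF.addSubgroup g}
  mul_mem' hx hy := MonoidAlgebra.coeff_mul_mem fun a b => hF.mul_mem (hx a) (hy b)
  one_mem' := MonoidAlgebra.coeff_single_mem (T := hF.addSubgroup) hF.one_mem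
  add_mem' hx hy g := hF.add_mem (hx g) (hy g)
  zero_mem' := hF.zero_mem
  neg_mem' hx g := hF.neg_mem (hx g)

theorem mem_reesRing {f : MonoidAlgebra R G} : f ∈ hF.reesRing ↔ ∀ g, f.coeff g ∈ F g :=
  Iff.rfl

theorem single_mem_reesRing {g : G} {r : R} (hr : r ∈ F g) :
    MonoidAlgebra.single g r ∈ hF.reesRing :=
  MonoidAlgebra.coeff_single_mem (T := hF.addSubgroup) hr

theorem reesRing_eq_sum_single (x : hF.reesRing) :
    x = ∑ g ∈ (x : MonoidAlgebra R G).coeff.support,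
      ⟨MonoidAlgebra.single g ((x : MonoidAlgebra R G).coeff g),
        hF.single_mem_reesRing (x.2 g)⟩ :=
  Subtype.ext <| by
    push_cast
    exact (MonoidAlgebra.sum_coeff_single _).symm

noncomputable def reesStrictIdeal [MulLeftStrictMono G] [MulRightStrictMono G] :
    TwoSidedIdeal hF.reesRing :=
  .mk' {x | ∀ g, (x : MonoidAlgebra R G).coeff g ∈ hF.strict g}
    (fun g => (hF.strict g).zero_mem)
    (fun hx hy g => (hF.strict g).add_mem (hx g) (hy g))
    (fun hx g => (hF.strict g).neg_mem (hx g))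
    (fun {x _} hy =>
      MonoidAlgebra.coeff_mul_mem fun a b => hF.mul_mem_strict_of_right (x.2 a) (hy b))
    (fun {_ y} hx =>
      MonoidAlgebra.coeff_mul_mem fun a b => hF.mul_mem_strict_of_left (hx a) (y.2 b))

theorem mem_reesStrictIdeal [MulLeftStrictMono G] [MulRightStrictMono G] {x : hF.reesRing} :
    x ∈ hF.reesStrictIdeal ↔ ∀ g, (x : MonoidAlgebra R G).coeff g ∈ hF.strict g :=
  TwoSidedIdeal.mem_mk' ..

theorem single_mem_span_of_mem_strict [MulLeftStrictMono G] {g : G} {r : R}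
    (hr : r ∈ hF.strict g) :
    (⟨MonoidAlgebra.single g r, hF.single_mem_reesRing (hF.strict_le g hr)⟩ : hF.reesRing) ∈
      TwoSidedIdeal.span {x : hF.reesRing | ∃ g : G, g < 1 ∧
        (x : MonoidAlgebra R G) = MonoidAlgebra.single g 1} := by
  rcases hr with rfl | ⟨h, hg, hr⟩
  · convert TwoSidedIdeal.zero_mem _
    exact MonoidAlgebra.single_zero g
  · have hlt : h⁻¹ * g < 1 := by simpa using mul_lt_mul_right hg h⁻¹
    have hgen : (⟨MonoidAlgebra.single (h⁻¹ * g) 1,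
        hF.single_mem_reesRing (hF.antitone hlt.le hF.one_mem)⟩ : hF.reesRing) ∈
          TwoSidedIdeal.span {x : hF.reesRing | ∃ g : G, g < 1 ∧
            (x : MonoidAlgebra R G) = MonoidAlgebra.single g 1} :=
      TwoSidedIdeal.subset_span ⟨_, hlt, rfl⟩
    convert TwoSidedIdeal.mul_mem_left _ ⟨_, hF.single_mem_reesRing hr⟩ _ hgen using 1
    exact Subtype.ext <| by simp [MonoidAlgebra.single_mul_single]

theorem span_single_lt_one_eq_reesStrictIdeal [MulLeftStrictMono G] [MulRightStrictMono G] :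
    TwoSidedIdeal.span {x : hF.reesRing | ∃ g : G, g < 1 ∧
      (x : MonoidAlgebra R G) = MonoidAlgebra.single g 1} = hF.reesStrictIdeal := by
  refine le_antisymm (TwoSidedIdeal.span_le.2 ?_) fun x hx => ?_
  · rintro x ⟨g, hg, hx⟩
    rw [SetLike.mem_coe, mem_reesStrictIdeal, hx]
    exact MonoidAlgebra.coeff_single_mem (T := hF.strict) (Or.inr ⟨1, hg, hF.one_mem⟩)
  · rw [hF.reesRing_eq_sum_single x]
    exact sum_mem fun g _ => hF.single_mem_span_of_mem_strict (hF.mem_reesStrictIdeal.1 hx g)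

end IsDescendingFiltration

def gradedLift {A : Type} [AddCommMonoid A] (φ : G → R → A) (x : MonoidAlgebra R G) : A :=
  x.coeff.sum φ

namespace IsAssociatedGradedRing

variable {F : G → Set R} {A : Type} [Ring A] {φ : G → R → A}

theorem map_zero (H : IsAssociatedGradedRing R G F A φ) {g : G} (h0 : (0 : R) ∈ F g) :
    φ g 0 = 0 := by
  simpa using H.map_add g 0 0 h0 h0

theorem gradedLift_eq_sum (H : IsAssociatedGradedRing R G F A φ) (hF : IsDescendingFiltration F)
    {x : MonoidAlgebra R G} {s : Finset G} (hs : x.coeff.support ⊆ s) :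
    gradedLift φ x = ∑ g ∈ s, φ g (x.coeff g) :=
  Finsupp.sum_of_support_subset _ hs _ fun g _ => H.map_zero (hF.zero_mem g)

theorem gradedLift_single (H : IsAssociatedGradedRing R G F A φ) (hF : IsDescendingFiltration F)
    (g : G) (r : R) :
    gradedLift φ (MonoidAlgebra.single g r) = φ g r :=
  Finsupp.sum_single_index (H.map_zero (hF.zero_mem g))

theorem gradedLift_add (H : IsAssociatedGradedRing R G F A φ) (hF : IsDescendingFiltration F)
    {x y : MonoidAlgebra R G} (hx : x ∈ hF.reesRing) (hy : y ∈ hF.reesRing) :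
    gradedLift φ (x + y) = gradedLift φ x + gradedLift φ y := by
  classical
  have hs : (x + y).coeff.support ⊆ x.coeff.support ∪ y.coeff.support := by
    rw [MonoidAlgebra.coeff_add]
    exact Finsupp.support_add
  rw [H.gradedLift_eq_sum hF hs, H.gradedLift_eq_sum hF Finset.subset_union_left,
    H.gradedLift_eq_sum hF Finset.subset_union_right, ← Finset.sum_add_distrib]
  exact Finset.sum_congr rfl fun g _ => H.map_add g _ _ (hx g) (hy g)

noncomputable def reesAddHom (H : IsAssociatedGradedRing R G F A φ)
    (hF : IsDescendingFiltration F) : hF.reesRing →+ A :=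
  AddMonoidHom.mk' (fun x => gradedLift φ x) fun x y => H.gradedLift_add hF x.2 y.2

theorem reesAddHom_single (H : IsAssociatedGradedRing R G F A φ) (hF : IsDescendingFiltration F)
    {g : G} {r : R} (hr : MonoidAlgebra.single g r ∈ hF.reesRing) :
    H.reesAddHom hF ⟨MonoidAlgebra.single g r, hr⟩ = φ g r :=
  H.gradedLift_single hF g r

theorem reesAddHom_mul (H : IsAssociatedGradedRing R G F A φ) (hF : IsDescendingFiltration F)
    (x y : hF.reesRing) :
    H.reesAddHom hF (x * y) = H.reesAddHom hF x * H.reesAddHom hF y := by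
  have hsingle : ∀ a b : G, ∀ (r s : R) (hr : r ∈ F a) (hs : s ∈ F b),
      H.reesAddHom hF (⟨_, hF.single_mem_reesRing hr⟩ * ⟨_, hF.single_mem_reesRing hs⟩) =
        H.reesAddHom hF ⟨_, hF.single_mem_reesRing hr⟩ *
          H.reesAddHom hF ⟨_, hF.single_mem_reesRing hs⟩ := by
    intro a b r s hr hs
    have hprod : (⟨_, hF.single_mem_reesRing hr⟩ * ⟨_, hF.single_mem_reesRing hs⟩ :
        hF.reesRing) = ⟨_, hF.single_mem_reesRing (hF.mul_mem hr hs)⟩ :=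
      Subtype.ext (MonoidAlgebra.single_mul_single a b r s)
    rw [hprod, reesAddHom_single, reesAddHom_single, reesAddHom_single, H.map_mul a b r s hr hs]
  rw [hF.reesRing_eq_sum_single x, hF.reesRing_eq_sum_single y]
  simp only [Finset.sum_mul_sum, map_sum]
  exact Finset.sum_congr rfl fun a _ => Finset.sum_congr rfl fun b _ =>
    hsingle _ _ _ _ (x.2 a) (y.2 b)

noncomputable def reesHom (H : IsAssociatedGradedRing R G F A φ)
    (hF : IsDescendingFiltration F) : hF.reesRing →+* A :=
  { H.reesAddHom hF with
    map_one' := by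
      have hone : (1 : hF.reesRing) = ⟨_, hF.single_mem_reesRing hF.one_mem⟩ :=
        Subtype.ext MonoidAlgebra.one_def
      simpa [hone] using (H.reesAddHom_single hF _).trans H.map_one
    map_mul' := H.reesAddHom_mul hF }

theorem ker_reesHom [MulLeftStrictMono G] [MulRightStrictMono G]
    (H : IsAssociatedGradedRing R G F A φ) (hF : IsDescendingFiltration F) :
    TwoSidedIdeal.ker (H.reesHom hF) = hF.reesStrictIdeal := by
  ext x
  have hsum : H.reesHom hF x =
      ∑ g ∈ (x : MonoidAlgebra R G).coeff.support, φ g ((x : MonoidAlgebra R G).coeff g) :=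
    H.gradedLift_eq_sum hF subset_rfl
  rw [TwoSidedIdeal.mem_ker, hF.mem_reesStrictIdeal, hsum]
  constructor
  · intro h0 g
    by_cases hg : g ∈ (x : MonoidAlgebra R G).coeff.support
    · exact (H.zero_iff g _ (x.2 g)).1 (H.indep _ _ (fun g _ => x.2 g) h0 g hg)
    · rw [Finsupp.notMem_support_iff.1 hg]
      exact (hF.strict g).zero_mem
  · exact fun h => Finset.sum_eq_zero fun g _ => (H.zero_iff g _ (x.2 g)).2 (h g)

theorem reesHom_surjective (H : IsAssociatedGradedRing R G F A φ)
    (hF : IsDescendingFiltration F) : Function.Surjective (H.reesHom hF) := by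
  have hle : AddSubgroup.closure (⋃ g, φ g '' F g) ≤ (H.reesHom hF).range.toAddSubgroup := by
    refine (AddSubgroup.closure_le _).2 (Set.iUnion_subset fun g => ?_)
    rintro _ ⟨r, hr, rfl⟩
    exact ⟨⟨_, hF.single_mem_reesRing hr⟩, H.reesAddHom_single hF _⟩
  exact fun a => hle (H.gen ▸ AddSubgroup.mem_top a)

end IsAssociatedGradedRing

end Filtration

theorem rees_ring_mod_ideal_iso_associated_graded_general
    (R : Type) [Ring R]
    (G : Type) [Group G] [LinearOrder G]
    [CovariantClass G G (· * ·) (· < ·)]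
    [CovariantClass G G (Function.swap (· * ·)) (· < ·)]
    (F : G → Set R)
    (hsub : ∀ g : G, (0 : R) ∈ F g ∧ (∀ x y, x ∈ F g → y ∈ F g → x + y ∈ F g) ∧
        (∀ x, x ∈ F g → -x ∈ F g))
    (hF1 : ∀ g h : G, g ≤ h → F h ⊆ F g)
    (hF2 : ∀ g h : G, ∀ x ∈ F g, ∀ y ∈ F h, x * y ∈ F (g * h))
    (hF3 : (1 : R) ∈ F 1)
    -- the Rees ring, as a subring of the group ring `R[G]`
    (S : Subring (MonoidAlgebra R G))
    (hS : ∀ f : MonoidAlgebra R G, f ∈ S ↔ ∀ g : G, f.coeff g ∈ F g)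
    -- the two-sided ideal of `S` generated by the group elements `g < 1`
    (J : TwoSidedIdeal S)
    (hJ : J = TwoSidedIdeal.span
      {x : S | ∃ g : G, g < 1 ∧ (x : MonoidAlgebra R G) = MonoidAlgebra.single g 1}) :
    -- (a)  `J = ⊕_g (F_{>g} R)·g`
    (∀ x : S, x ∈ J ↔ ∀ g : G,
      ((x : MonoidAlgebra R G).coeff g = 0 ∨ ∃ h > g, (x : MonoidAlgebra R G).coeff g ∈ F h)) ∧
    -- (b)  `Rees(R)/J ≅ gr(R)` as `G`-graded rings
    (∀ (A : Type) [Ring A] (φ : G → R → A), IsAssociatedGradedRing R G F A φ →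
      ∃ e : J.ringCon.Quotient ≃+* A,
        ∀ (g : G) (x : R) (_ : x ∈ F g)
          (hxS : (MonoidAlgebra.single g x : MonoidAlgebra R G) ∈ S),
          e (J.ringCon.mk' ⟨MonoidAlgebra.single g x, hxS⟩) = φ g x) := by
  have hF : IsDescendingFiltration F :=
    { zero_mem := fun g => (hsub g).1
      add_mem := fun hx hy => (hsub _).2.1 _ _ hx hy
      neg_mem := fun hx => (hsub _).2.2 _ hx
      antitone := hF1
      mul_mem := fun hx hy => hF2 _ _ _ hx _ hy
      one_mem := hF3 }
  obtain rfl : S = hF.reesRing := SetLike.ext hS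
  subst hJ
  rw [hF.span_single_lt_one_eq_reesStrictIdeal]
  refine ⟨fun x => hF.mem_reesStrictIdeal, fun A _ φ H => ?_⟩
  rw [← H.ker_reesHom hF]
  exact ⟨RingCon.quotientKerEquivOfSurjective _ (H.reesHom_surjective hF),
    fun g x _ hxS => H.reesAddHom_single hF hxS⟩

/-- Let `R` be a ring with a descending `G`-filtration `{F g}` over an
ordered group `(G,<)`, and let `Rees(R) = ⊕_g (F g)·g ⊆ R[G]` be the Rees ring, realized
as the subring `S` of the group ring `R[G]` of those elements whose `g`-coefficient lies
in `F g`.  Let `J` be the (two-sided) ideal of `S` generated by the elements `g` with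
`g < 1`.  Then `J = ⊕_g (F_{>g})·g`, i.e. `x ∈ J` iff each coefficient `x g` lies in
`F_{>g} = Σ_{h>g} F h`; and `S/J` is isomorphic, as a `G`-graded ring, to the associated
graded ring `gr(R)`: for any realization `(A, φ)` of `gr(R)` there is a ring isomorphism
`S/J ≃+* A` carrying the class of `(x)·g` (for `x ∈ F g`) to `φ g x`. -/
theorem rees_ring_mod_ideal_iso_associated_graded
    (R : Type) [Ring R]
    (G : Type) [Group G] [LinearOrder G]
    [CovariantClass G G (· * ·) (· < ·)]
    [CovariantClass G G (Function.swap (· * ·)) (· < ·)]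
    (F : G → Set R)
    (hsub : ∀ g : G, (0 : R) ∈ F g ∧ (∀ x y, x ∈ F g → y ∈ F g → x + y ∈ F g) ∧
        (∀ x, x ∈ F g → -x ∈ F g))
    (hF1 : ∀ g h : G, g ≤ h → F h ⊆ F g)
    (hF2 : ∀ g h : G, ∀ x ∈ F g, ∀ y ∈ F h, x * y ∈ F (g * h))
    (hF3 : (1 : R) ∈ F 1)
    (hF4 : ∀ x : R, ∃ g : G, x ∈ F g)
    -- the Rees ring, as a subring of the group ring `R[G]`
    (S : Subring (MonoidAlgebra R G))
    (hS : ∀ f : MonoidAlgebra R G, f ∈ S ↔ ∀ g : G, f.coeff g ∈ F g)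
    -- the two-sided ideal of `S` generated by the group elements `g < 1`
    (J : TwoSidedIdeal S)
    (hJ : J = TwoSidedIdeal.span
      {x : S | ∃ g : G, g < 1 ∧ (x : MonoidAlgebra R G) = MonoidAlgebra.single g 1}) :
    -- (a)  `J = ⊕_g (F_{>g} R)·g`
    (∀ x : S, x ∈ J ↔ ∀ g : G,
      ((x : MonoidAlgebra R G).coeff g = 0 ∨ ∃ h > g, (x : MonoidAlgebra R G).coeff g ∈ F h)) ∧
    -- (b)  `Rees(R)/J ≅ gr(R)` as `G`-graded rings
    (∀ (A : Type) [Ring A] (φ : G → R → A), IsAssociatedGradedRing R G F A φ →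
      ∃ e : J.ringCon.Quotient ≃+* A,
        ∀ (g : G) (x : R) (_ : x ∈ F g)
          (hxS : (MonoidAlgebra.single g x : MonoidAlgebra R G) ∈ S),
          e (J.ringCon.mk' ⟨MonoidAlgebra.single g x, hxS⟩) = φ g x) :=
  rees_ring_mod_ideal_iso_associated_graded_general R G F hsub hF1 hF2 hF3 S hS J hJ
end

section
/- Let R be a ring with a descending G-filtration over an ordered group (G,<), and Rees(R) its Rees ring. Let I be the ideal of Rees(R) generated by the elements 1 - g for g < 1. Then Rees(R)/I is isomorphic to R as a ring. -/
/-!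
The augmentation `ε : R[G] → R`, `∑ r_g g ↦ ∑ r_g`, is a ring map. On the Rees ring it is onto,
since every `r` lies in some `F g`, and it kills every `1 - g`. Conversely, let `f = ∑ r_g g` be
in the Rees ring with `ε f = 0`, and pick `g₀` below the support of `f`. As `F` is descending,
every `r_g g₀` is in the Rees ring, and `r_g g - r_g g₀ = (r_g g)(1 - g⁻¹g₀)` with `g⁻¹g₀ < 1`;
so `f = ∑ (r_g g - r_g g₀)` lies in `I`. Hence `I = ker ε`, and `Rees(R)/I ≅ R`.
-/

open MonoidAlgebra

namespace MonoidAlgebra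

variable {R G : Type*} [Semiring R] [Monoid G]

noncomputable def augmentation : MonoidAlgebra R G →+* R :=
  liftNCRingHom (RingHom.id R) 1 fun _ _ => Commute.one_right _

@[simp]
theorem augmentation_single (g : G) (r : R) : augmentation (single g r) = r := by
  simp [augmentation, liftNCRingHom_single]

theorem augmentation_apply (x : MonoidAlgebra R G) :
    augmentation x = x.coeff.sum fun _ r => r := by
  conv_lhs => rw [← sum_coeff_single x]
  simp [Finsupp.sum, map_sum]

end MonoidAlgebra

theorem TwoSidedIdeal.exists_ringEquiv_quotient_of_eq_ker {A B : Type*} [Ring A] [Ring B]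
    {I : TwoSidedIdeal A} {f : A →+* B} (hf : Function.Surjective f)
    (hI : I = TwoSidedIdeal.ker f) :
    ∃ e : I.ringCon.Quotient ≃+* B, ∀ a, e (I.ringCon.mk' a) = f a := by
  subst hI
  exact ⟨RingCon.quotientKerEquivOfSurjective f hf, fun _ => rfl⟩

section Rees

variable {R G : Type*} [Ring R] [Group G]

def IsReesSubring (F : G → Set R) (S : Subring (MonoidAlgebra R G)) : Prop :=
  ∀ f : MonoidAlgebra R G, f ∈ S ↔ ∀ g, f.coeff g ∈ F g

def oneSubSingleGenerators [LT G] (S : Subring (MonoidAlgebra R G)) : Set S :=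
  {x | ∃ g : G, g < 1 ∧ (x : MonoidAlgebra R G) = 1 - single g 1}

namespace IsReesSubring

variable {F : G → Set R} {S : Subring (MonoidAlgebra R G)}

theorem coeff_mem (hS : IsReesSubring F S) (f : S) (g : G) :
    (f : MonoidAlgebra R G).coeff g ∈ F g :=
  (hS f).1 f.2 g

theorem single_mem (hS : IsReesSubring F S) {g : G} {r : R} (hr : r ∈ F g) :
    single g r ∈ S := by
  classical
  refine (hS _).2 fun h => ?_
  rw [coeff_single, Finsupp.single_apply]
  split_ifs with hgh
  · exact hgh ▸ hr
  · exact hS.coeff_mem 0 h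

theorem augmentation_comp_subtype_surjective (hS : IsReesSubring F S)
    (hF : ∀ r : R, ∃ g : G, r ∈ F g) :
    Function.Surjective (augmentation.comp S.subtype) := fun r =>
  let ⟨g, hg⟩ := hF r
  ⟨⟨single g r, hS.single_mem hg⟩, augmentation_single g r⟩

section PartialOrder

variable [PartialOrder G]

theorem one_sub_single_mem (hS : IsReesSubring F S) (hF : Antitone F) {g : G} (hg : g ≤ 1) :
    1 - single g (1 : R) ∈ S :=
  S.sub_mem S.one_mem (hS.single_mem (hF hg (by simpa using hS.coeff_mem 1 1)))

theorem coeff_mem_of_forall_le (hS : IsReesSubring F S) (hF : Antitone F) (f : S) {g₀ : G}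
    (hg₀ : ∀ g ∈ (f : MonoidAlgebra R G).coeff.support, g₀ ≤ g) (g : G) :
    (f : MonoidAlgebra R G).coeff g ∈ F g₀ := by
  by_cases hg : g ∈ (f : MonoidAlgebra R G).coeff.support
  · exact hF (hg₀ g hg) (hS.coeff_mem f g)
  · rw [Finsupp.notMem_support_iff.1 hg]
    exact hS.coeff_mem 0 g₀

theorem single_sub_single_mem_span [MulLeftStrictMono G] (hS : IsReesSubring F S)
    (hF : Antitone F) {g g' : G} (hle : g' ≤ g) {r : R} {x y : S}
    (hx : (x : MonoidAlgebra R G) = single g r) (hy : (y : MonoidAlgebra R G) = single g' r) :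
    x - y ∈ TwoSidedIdeal.span (oneSubSingleGenerators S) := by
  rcases hle.lt_or_eq with hlt | rfl
  · have hlt₁ : g⁻¹ * g' < 1 := by simpa using mul_lt_mul_right hlt g⁻¹
    let w : S := ⟨1 - single (g⁻¹ * g') 1, hS.one_sub_single_mem hF hlt₁.le⟩
    have hxw : x * w = x - y := Subtype.ext (by simp [w, hx, hy, mul_sub, single_mul_single])
    rw [← hxw]
    exact TwoSidedIdeal.mul_mem_left _ _ _ (TwoSidedIdeal.subset_span ⟨_, hlt₁, rfl⟩)
  · rw [Subtype.ext (hx.trans hy.symm), sub_self]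
    exact TwoSidedIdeal.zero_mem _

end PartialOrder

section LinearOrder

variable [LinearOrder G] [MulLeftStrictMono G]

theorem mem_span_of_augmentation_eq_zero (hS : IsReesSubring F S) (hF : Antitone F) {f : S}
    (hf : augmentation (f : MonoidAlgebra R G) = 0) :
    f ∈ TwoSidedIdeal.span (oneSubSingleGenerators S) := by
  classical
  set c := (f : MonoidAlgebra R G).coeff
  obtain ⟨g₀, hg₀⟩ := c.support.bddBelow
  let x (g : G) : S := ⟨single g (c g), hS.single_mem (hS.coeff_mem f g)⟩
  let y (g : G) : S :=
    ⟨single g₀ (c g), hS.single_mem (hS.coeff_mem_of_forall_le hF f (fun _ h => hg₀ h) g)⟩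
  have hf_eq : f = ∑ g ∈ c.support, (x g - y g) := by
    refine Subtype.ext ?_
    have hy : ∑ g ∈ c.support, single g₀ (c g) = 0 := by
      rw [← single_zero g₀, ← hf, augmentation_apply]
      exact (map_sum (singleAddHom g₀) c c.support).symm
    simp only [x, y, AddSubmonoidClass.coe_finsetSum, AddSubgroupClass.coe_sub,
      Finset.sum_sub_distrib, hy, sub_zero]
    exact (sum_coeff_single _).symm
  rw [hf_eq]
  exact TwoSidedIdeal.finsetSum_mem _ _ _ fun g hg =>
    hS.single_sub_single_mem_span hF (hg₀ hg) rfl rfl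

theorem span_oneSubSingleGenerators_eq_ker (hS : IsReesSubring F S) (hF : Antitone F) :
    TwoSidedIdeal.span (oneSubSingleGenerators S) =
      TwoSidedIdeal.ker (augmentation.comp S.subtype) := by
  refine le_antisymm (TwoSidedIdeal.span_le.2 ?_) fun f hf =>
    hS.mem_span_of_augmentation_eq_zero hF ((TwoSidedIdeal.mem_ker _).1 hf)
  rintro x ⟨g, -, hx⟩
  simp [TwoSidedIdeal.mem_ker, hx]

end LinearOrder

end IsReesSubring

end Rees

theorem rees_ring_mod_one_sub_g_iso_base_ring_general
    (R : Type) [Ring R]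
    (G : Type) [Group G] [LinearOrder G]
    [CovariantClass G G (· * ·) (· < ·)]
    (F : G → Set R)
    (hF1 : ∀ g h : G, g ≤ h → F h ⊆ F g)
    (hF4 : ∀ x : R, ∃ g : G, x ∈ F g)
    -- the Rees ring, as a subring of the group ring `R[G]`
    (S : Subring (MonoidAlgebra R G))
    (hS : ∀ f : MonoidAlgebra R G, f ∈ S ↔ ∀ g : G, f.coeff g ∈ F g)
    -- the two-sided ideal of `S` generated by the elements `1 - g`, `g < 1`
    (I : TwoSidedIdeal S)
    (hI : I = TwoSidedIdeal.span
      {x : S | ∃ g : G, g < 1 ∧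
        (x : MonoidAlgebra R G) = 1 - MonoidAlgebra.single g 1}) :
    ∃ e : I.ringCon.Quotient ≃+* R,
      ∀ f : S, e (I.ringCon.mk' f) =
        Finsupp.sum (f : MonoidAlgebra R G).coeff (fun _ a => a) := by
  obtain ⟨e, he⟩ := TwoSidedIdeal.exists_ringEquiv_quotient_of_eq_ker
    (IsReesSubring.augmentation_comp_subtype_surjective hS hF4)
    (hI.trans (IsReesSubring.span_oneSubSingleGenerators_eq_ker hS hF1))
  exact ⟨e, fun f => (he f).trans (augmentation_apply _)⟩

/-- Let `R` be a ring with a descending `G`-filtration over an ordered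
group `(G,<)`, and `Rees(R) = ⊕_g (F g)·g ⊆ R[G]` its Rees ring, realized as the subring
`S` of the group ring `R[G]`.  Let `I` be the (two-sided) ideal of `S` generated by the
elements `1 - g` for `g < 1`.  Then `Rees(R)/I ≅ R` as rings; the isomorphism sends the
class of an element of the Rees ring to the sum of its coefficients. -/
theorem rees_ring_mod_one_sub_g_iso_base_ring
    (R : Type) [Ring R]
    (G : Type) [Group G] [LinearOrder G]
    [CovariantClass G G (· * ·) (· < ·)]
    [CovariantClass G G (Function.swap (· * ·)) (· < ·)]
    (F : G → Set R)
    (hsub : ∀ g : G, (0 : R) ∈ F g ∧ (∀ x y, x ∈ F g → y ∈ F g → x + y ∈ F g) ∧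
        (∀ x, x ∈ F g → -x ∈ F g))
    (hF1 : ∀ g h : G, g ≤ h → F h ⊆ F g)
    (hF2 : ∀ g h : G, ∀ x ∈ F g, ∀ y ∈ F h, x * y ∈ F (g * h))
    (hF3 : (1 : R) ∈ F 1)
    (hF4 : ∀ x : R, ∃ g : G, x ∈ F g)
    -- the Rees ring, as a subring of the group ring `R[G]`
    (S : Subring (MonoidAlgebra R G))
    (hS : ∀ f : MonoidAlgebra R G, f ∈ S ↔ ∀ g : G, f.coeff g ∈ F g)
    -- the two-sided ideal of `S` generated by the elements `1 - g`, `g < 1`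
    (I : TwoSidedIdeal S)
    (hI : I = TwoSidedIdeal.span
      {x : S | ∃ g : G, g < 1 ∧
        (x : MonoidAlgebra R G) = 1 - MonoidAlgebra.single g 1}) :
    ∃ e : I.ringCon.Quotient ≃+* R,
      ∀ f : S, e (I.ringCon.mk' f) =
        Finsupp.sum (f : MonoidAlgebra R G).coeff (fun _ a => a) :=
  rees_ring_mod_one_sub_g_iso_base_ring_general R G F hF1 hF4 S hS I hI
end

section
/- Let R be a ring with a descending G-filtration over an ordered group (G,<). Then the set G_1 = {g ∈ G : g ≤ 1}, viewed inside the Rees ring Rees(R), is an Ore subset of Rees(R), and the Ore localization G_1^{-1} Rees(R) is isomorphic to the group ring R[G]. -/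
/-! The Rees condition `f.coeff t ∈ F t` is preserved when every coefficient is moved to a
smaller index, because the filtration is descending. Multiplying by `single h 1` with `h ≤ 1`
moves the coefficient at `s` to `h * s`; since a finitely supported `f` has only finitely many
indices to control and `G` is linearly ordered, one `h ≤ 1` can be chosen small enough for all
of them. This gives both the Ore condition (the index `s` of `f` must move below `s * g`) and
the left fractions (the index `s` must move below some `k s` with `f.coeff s ∈ F (k s)`). -/

open MonoidAlgebra

theorem exists_le_forall_le_of_finset {α β : Type*} [LinearOrder α] (a : α) (s : Finset β)
    (φ : β → α) : ∃ b ≤ a, ∀ x ∈ s, b ≤ φ x := by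
  have : Nonempty α := ⟨a⟩
  obtain ⟨m, hm⟩ := (s.image φ).bddBelow
  exact ⟨m ⊓ a, inf_le_right, fun x hx => inf_le_of_left_le (hm (Finset.mem_image_of_mem φ hx))⟩

theorem exists_le_one_forall_mul_le {G : Type*} [Group G] [LinearOrder G] [MulRightMono G]
    (k : G → G) (s : Finset G) : ∃ g ≤ 1, ∀ x ∈ s, g * x ≤ k x := by
  obtain ⟨g, hg1, hg⟩ := exists_le_forall_le_of_finset 1 s fun x => k x * x⁻¹
  exact ⟨g, hg1, fun x hx => le_mul_inv_iff_mul_le.1 (hg x hx)⟩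

section Coefficients

variable {R G : Type*} [Semiring R] {F : G → Set R}

theorem coeff_single_one_mem (hzero : ∀ t, (0 : R) ∈ F t) {g : G} (hg : (1 : R) ∈ F g)
    (t : G) : (single g (1 : R)).coeff t ∈ F t := by
  classical
  rw [coeff_single, Finsupp.single_apply]
  split_ifs with hgt
  · exact hgt ▸ hg
  · exact hzero t

theorem coeff_single_mul_mul_single_mem [Group G] (hzero : ∀ t, (0 : R) ∈ F t) {f : R[G]}
    {a b : G} (hf : ∀ s ∈ f.coeff.support, f.coeff s ∈ F (a * s * b)) (t : G) :
    (single a 1 * f * single b 1).coeff t ∈ F t := by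
  rw [coeff_mul_single_apply, coeff_single_mul_apply, one_mul, mul_one]
  by_cases hs : a⁻¹ * (t * b⁻¹) ∈ f.coeff.support
  · simpa [mul_assoc] using hf _ hs
  · rw [Finsupp.notMem_support_iff.1 hs]
    exact hzero t

end Coefficients

theorem rees_ring_localization_at_G1_is_group_ring_general
    (R : Type) [Ring R]
    (G : Type) [Group G] [LinearOrder G]
    [CovariantClass G G (Function.swap (· * ·)) (· < ·)]
    (F : G → Set R)
    (hsub : ∀ g : G, (0 : R) ∈ F g ∧ (∀ x y, x ∈ F g → y ∈ F g → x + y ∈ F g) ∧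
        (∀ x, x ∈ F g → -x ∈ F g))
    (hF1 : ∀ g h : G, g ≤ h → F h ⊆ F g)
    (hF3 : (1 : R) ∈ F 1)
    (hF4 : ∀ x : R, ∃ g : G, x ∈ F g)
    -- the Rees ring, as a subring of the group ring `R[G]`
    (S : Subring (MonoidAlgebra R G))
    (hS : ∀ f : MonoidAlgebra R G, f ∈ S ↔ ∀ g : G, f.coeff g ∈ F g) :
    -- `G₁` lies in the Rees ring and is multiplicatively closed
    (∀ g : G, g ≤ 1 → (MonoidAlgebra.single g (1 : R) : MonoidAlgebra R G) ∈ S) ∧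
    (∀ g h : G, g ≤ 1 → h ≤ 1 →
      (MonoidAlgebra.single g (1 : R) : MonoidAlgebra R G) * MonoidAlgebra.single h 1
        = MonoidAlgebra.single (g * h) 1) ∧
    -- the Ore condition for `G₁` in `S`
    (∀ f : MonoidAlgebra R G, f ∈ S → ∀ g : G, g ≤ 1 →
      ∃ h : G, h ≤ 1 ∧ ∃ f' : MonoidAlgebra R G, f' ∈ S ∧
        (MonoidAlgebra.single h (1 : R) : MonoidAlgebra R G) * f
          = f' * MonoidAlgebra.single g 1) ∧
    -- `G₁⁻¹ Rees(R) = R[G]`: every element of the group ring is a left fraction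
    (∀ f : MonoidAlgebra R G, ∃ g : G, g ≤ 1 ∧
      (MonoidAlgebra.single g (1 : R) : MonoidAlgebra R G) * f ∈ S) := by
  have := mulRightMono_of_mulRightStrictMono G
  have hzero : ∀ g, (0 : R) ∈ F g := fun g => (hsub g).1
  refine ⟨fun g hg => (hS _).2 (coeff_single_one_mem hzero (hF1 g 1 hg hF3)),
    fun g h _ _ => by rw [single_mul_single, one_mul], fun f hf g _ => ?_, fun f => ?_⟩
  · obtain ⟨h, hh1, hle⟩ := exists_le_one_forall_mul_le (· * g) f.coeff.support
    refine ⟨h, hh1, single h 1 * f * single g⁻¹ 1, (hS _).2 ?_, ?_⟩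
    · exact coeff_single_mul_mul_single_mem hzero fun s hs =>
        hF1 _ _ (mul_inv_le_iff_le_mul.2 (hle s hs)) ((hS f).1 hf s)
    · rw [mul_assoc, single_mul_single, inv_mul_cancel, one_mul, ← one_def, mul_one]
  · choose k hk using fun s => hF4 (f.coeff s)
    obtain ⟨g, hg1, hle⟩ := exists_le_one_forall_mul_le k f.coeff.support
    refine ⟨g, hg1, (hS _).2 fun t => ?_⟩
    simpa [← one_def] using coeff_single_mul_mul_single_mem hzero (b := 1)
      (fun s hs => hF1 _ _ (by simpa using hle s hs) (hk s)) t

/-- Let `R` be a ring with a descending `G`-filtration over an ordered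
group `(G,<)`, and `Rees(R)` its Rees ring, realized as the subring `S` of the group ring
`R[G]` of elements whose `g`-coefficient lies in `F g`.  Then the set
`G₁ = {g ∈ G : g ≤ 1}`, viewed inside `S` as the elements `(1)·g`, is a multiplicatively
closed subset of `S` satisfying the Ore condition, and the Ore localization
`G₁⁻¹ Rees(R)` is the group ring `R[G]`: every element of `R[G]` becomes an element of
the Rees ring after multiplying by a suitable denominator from `G₁`. -/
theorem rees_ring_localization_at_G1_is_group_ring
    (R : Type) [Ring R]
    (G : Type) [Group G] [LinearOrder G]
    [CovariantClass G G (· * ·) (· < ·)]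
    [CovariantClass G G (Function.swap (· * ·)) (· < ·)]
    (F : G → Set R)
    (hsub : ∀ g : G, (0 : R) ∈ F g ∧ (∀ x y, x ∈ F g → y ∈ F g → x + y ∈ F g) ∧
        (∀ x, x ∈ F g → -x ∈ F g))
    (hF1 : ∀ g h : G, g ≤ h → F h ⊆ F g)
    (hF2 : ∀ g h : G, ∀ x ∈ F g, ∀ y ∈ F h, x * y ∈ F (g * h))
    (hF3 : (1 : R) ∈ F 1)
    (hF4 : ∀ x : R, ∃ g : G, x ∈ F g)
    -- the Rees ring, as a subring of the group ring `R[G]`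
    (S : Subring (MonoidAlgebra R G))
    (hS : ∀ f : MonoidAlgebra R G, f ∈ S ↔ ∀ g : G, f.coeff g ∈ F g) :
    -- `G₁` lies in the Rees ring and is multiplicatively closed
    (∀ g : G, g ≤ 1 → (MonoidAlgebra.single g (1 : R) : MonoidAlgebra R G) ∈ S) ∧
    (∀ g h : G, g ≤ 1 → h ≤ 1 →
      (MonoidAlgebra.single g (1 : R) : MonoidAlgebra R G) * MonoidAlgebra.single h 1
        = MonoidAlgebra.single (g * h) 1) ∧
    -- the Ore condition for `G₁` in `S`
    (∀ f : MonoidAlgebra R G, f ∈ S → ∀ g : G, g ≤ 1 →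
      ∃ h : G, h ≤ 1 ∧ ∃ f' : MonoidAlgebra R G, f' ∈ S ∧
        (MonoidAlgebra.single h (1 : R) : MonoidAlgebra R G) * f
          = f' * MonoidAlgebra.single g 1) ∧
    -- `G₁⁻¹ Rees(R) = R[G]`: every element of the group ring is a left fraction
    (∀ f : MonoidAlgebra R G, ∃ g : G, g ≤ 1 ∧
      (MonoidAlgebra.single g (1 : R) : MonoidAlgebra R G) * f ∈ S) :=
  rees_ring_localization_at_G1_is_group_ring_general R G F hsub hF1 hF3 hF4 S hS
end

section
/- Let R be an Ore domain with a valuation υ : R → G ∪ {∞} for an ordered group (G,<). Then the set H of nonzero homogeneous elements of the associated graded ring gr_υ(R) is an Ore subset of gr_υ(R). -/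
/-!
Write `σ(x) = φ (υ x) x` for the leading form of `x ≠ 0`; every nonzero homogeneous element is
such a leading form, and `σ(x) σ(y) = σ(xy)` because `υ` is multiplicative. Hence the nonzero
homogeneous elements are closed under products (as `R` is a domain), and an Ore relation
`d y₁ = c y₂` in `R` yields the common left multiple `σ(d) σ(y₁) = σ(c) σ(y₂)` of any two of them.
Since homogeneous elements generate `gr_υ(R)` additively, the usual common-multiple argument
extends the Ore condition from homogeneous numerators to arbitrary ones.
-/

theorem exists_left_ore_of_mem_closure {A : Type*} [Ring A] {S : Set A}
    (hmulS : ∀ s₁ ∈ S, ∀ s₂ ∈ S, s₁ * s₂ ∈ S)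
    (hS : ∀ s₁ ∈ S, ∀ s₂ ∈ S, ∃ t₁ ∈ S, ∃ t₂ : A, t₁ * s₁ = t₂ * s₂)
    {a : A} (ha : a ∈ S) {f : A} (hf : f ∈ AddSubgroup.closure S) :
    ∃ b ∈ S, ∃ c : A, b * f = c * a := by
  induction hf using AddSubgroup.closure_induction with
  | mem f hf => exact hS f hf a ha
  | zero => exact ⟨a, ha, 0, by rw [mul_zero, zero_mul]⟩
  | add f₁ f₂ _ _ ih₁ ih₂ =>
    obtain ⟨b₁, hb₁, c₁, he₁⟩ := ih₁
    obtain ⟨b₂, hb₂, c₂, he₂⟩ := ih₂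
    obtain ⟨t₁, ht₁, t₂, heq⟩ := hS b₁ hb₁ b₂ hb₂
    refine ⟨t₁ * b₁, hmulS t₁ ht₁ b₁ hb₁, t₁ * c₁ + t₂ * c₂, ?_⟩
    rw [mul_add, add_mul, mul_assoc, he₁, heq, mul_assoc, he₂, mul_assoc, mul_assoc]
  | neg f _ ih =>
    obtain ⟨b, hb, c, he⟩ := ih
    exact ⟨b, hb, -c, by rw [mul_neg, he, neg_mul]⟩

section Graded

variable {R G A : Type} [Ring R] [Group G] [LinearOrder G] [Ring A]

def IsHomogeneous (υ : R → G) (φ : G → R → A) (a : A) : Prop :=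
  ∃ g : G, ∃ x : R, (x = 0 ∨ g ≤ υ x) ∧ a = φ g x

def nonzeroHomogeneous (υ : R → G) (φ : G → R → A) : Set A :=
  {a | a ≠ 0 ∧ IsHomogeneous υ φ a}

namespace IsAssociatedGradedRing

variable {υ : R → G} {φ : G → R → A}
  (hA : IsAssociatedGradedRing R G (fun g => {x : R | x = 0 ∨ g ≤ υ x}) A φ)
include hA

theorem map_ne_zero_iff {g : G} {x : R} (hx : x = 0 ∨ g ≤ υ x) :
    φ g x ≠ 0 ↔ x ≠ 0 ∧ υ x = g := by
  rw [ne_eq, hA.zero_iff g x hx]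
  constructor
  · intro h
    have hx0 : x ≠ 0 := fun h0 => h (Or.inl h0)
    refine ⟨hx0, le_antisymm ?_ (hx.resolve_left hx0)⟩
    by_contra hlt
    exact h (Or.inr ⟨υ x, lt_of_not_ge hlt, Or.inr le_rfl⟩)
  · rintro ⟨hx0, rfl⟩ (h0 | ⟨h, hlt, h0 | hle⟩)
    exacts [hx0 h0, hx0 h0, hlt.not_ge hle]

theorem map_valuation_ne_zero {x : R} (hx : x ≠ 0) : φ (υ x) x ≠ 0 :=
  (hA.map_ne_zero_iff (Or.inr le_rfl)).2 ⟨hx, rfl⟩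

theorem exists_eq_map_valuation {a : A} (ha : a ∈ nonzeroHomogeneous υ φ) :
    ∃ x : R, x ≠ 0 ∧ a = φ (υ x) x := by
  obtain ⟨ha0, g, x, hx, rfl⟩ := ha
  obtain ⟨hx0, rfl⟩ := (hA.map_ne_zero_iff hx).1 ha0
  exact ⟨x, hx0, rfl⟩

theorem map_valuation_mem_nonzeroHomogeneous {x : R} (hx : x ≠ 0) :
    φ (υ x) x ∈ nonzeroHomogeneous υ φ :=
  ⟨hA.map_valuation_ne_zero hx, υ x, x, Or.inr le_rfl, rfl⟩

theorem map_valuation_mul (hmul : ∀ x y : R, x ≠ 0 → y ≠ 0 → υ (x * y) = υ x * υ y)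
    {x y : R} (hx : x ≠ 0) (hy : y ≠ 0) :
    φ (υ x) x * φ (υ y) y = φ (υ (x * y)) (x * y) := by
  rw [hA.map_mul _ _ x y (Or.inr le_rfl) (Or.inr le_rfl), hmul x y hx hy]

theorem closure_nonzeroHomogeneous : AddSubgroup.closure (nonzeroHomogeneous υ φ) = ⊤ := by
  rw [eq_top_iff, ← hA.gen, AddSubgroup.closure_le]
  rintro _ ⟨_, ⟨g, rfl⟩, x, hx, rfl⟩
  by_cases h0 : φ g x = 0
  · rw [SetLike.mem_coe, h0]
    exact zero_mem _
  · exact AddSubgroup.subset_closure ⟨h0, g, x, hx, rfl⟩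

variable [NoZeroDivisors R] (hmul : ∀ x y : R, x ≠ 0 → y ≠ 0 → υ (x * y) = υ x * υ y)
include hmul

theorem mul_mem_nonzeroHomogeneous {a b : A} (ha : a ∈ nonzeroHomogeneous υ φ)
    (hb : b ∈ nonzeroHomogeneous υ φ) : a * b ∈ nonzeroHomogeneous υ φ := by
  obtain ⟨x, hx, rfl⟩ := hA.exists_eq_map_valuation ha
  obtain ⟨y, hy, rfl⟩ := hA.exists_eq_map_valuation hb
  rw [hA.map_valuation_mul hmul hx hy]
  exact hA.map_valuation_mem_nonzeroHomogeneous (mul_ne_zero hx hy)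

theorem exists_common_left_multiple
    (hOre : ∀ a b : R, b ≠ 0 → ∃ c d : R, d ≠ 0 ∧ d * a = c * b)
    {a b : A} (ha : a ∈ nonzeroHomogeneous υ φ) (hb : b ∈ nonzeroHomogeneous υ φ) :
    ∃ t₁ ∈ nonzeroHomogeneous υ φ, ∃ t₂ : A, t₁ * a = t₂ * b := by
  obtain ⟨x, hx, rfl⟩ := hA.exists_eq_map_valuation ha
  obtain ⟨y, hy, rfl⟩ := hA.exists_eq_map_valuation hb
  obtain ⟨c, d, hd, hdc⟩ := hOre x y hy
  have hc : c ≠ 0 := by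
    rintro rfl
    rw [zero_mul] at hdc
    exact mul_ne_zero hd hx hdc
  refine ⟨φ (υ d) d, hA.map_valuation_mem_nonzeroHomogeneous hd, φ (υ c) c, ?_⟩
  rw [hA.map_valuation_mul hmul hd hx, hA.map_valuation_mul hmul hc hy, hdc]

end IsAssociatedGradedRing

end Graded

theorem homogeneous_elements_ore_subset_of_graded_general
    (R : Type) [Ring R] [IsDomain R]
    -- `R` is a (left) Ore domain
    (hOre : ∀ a b : R, b ≠ 0 → ∃ c d : R, d ≠ 0 ∧ d * a = c * b)
    (G : Type) [Group G] [LinearOrder G]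
    (υ : R → G)
    (hmul : ∀ x y : R, x ≠ 0 → y ≠ 0 → υ (x * y) = υ x * υ y)
    -- the associated graded ring `gr_υ(R)` of the filtration induced by `υ`
    (A : Type) [Ring A] (φ : G → R → A)
    (hA : IsAssociatedGradedRing R G (fun g => {x : R | x = 0 ∨ g ≤ υ x}) A φ) :
    -- `H`, the set of nonzero homogeneous elements, is multiplicatively closed …
    (∀ a b : A, a ≠ 0 → b ≠ 0 →
      (∃ g : G, ∃ x : R, (x = 0 ∨ g ≤ υ x) ∧ a = φ g x) →
      (∃ h : G, ∃ y : R, (y = 0 ∨ h ≤ υ y) ∧ b = φ h y) →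
      a * b ≠ 0 ∧ ∃ l : G, ∃ z : R, (z = 0 ∨ l ≤ υ z) ∧ a * b = φ l z) ∧
    -- … and satisfies the Ore condition in `gr_υ(R)`
    (∀ a : A, a ≠ 0 → (∃ g : G, ∃ x : R, (x = 0 ∨ g ≤ υ x) ∧ a = φ g x) →
      ∀ f : A, ∃ b c : A, b ≠ 0 ∧
        (∃ h : G, ∃ y : R, (y = 0 ∨ h ≤ υ y) ∧ b = φ h y) ∧
        b * f = c * a) := by
  refine ⟨fun a b ha hb haH hbH => hA.mul_mem_nonzeroHomogeneous hmul ⟨ha, haH⟩ ⟨hb, hbH⟩, ?_⟩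
  intro a ha haH f
  have hf : f ∈ AddSubgroup.closure (nonzeroHomogeneous υ φ) := by
    rw [hA.closure_nonzeroHomogeneous]
    exact AddSubgroup.mem_top f
  obtain ⟨b, ⟨hb, hbH⟩, c, hbc⟩ := exists_left_ore_of_mem_closure
    (fun _ h₁ _ h₂ => hA.mul_mem_nonzeroHomogeneous hmul h₁ h₂)
    (fun _ h₁ _ h₂ => hA.exists_common_left_multiple hmul hOre h₁ h₂) ⟨ha, haH⟩ hf
  exact ⟨b, c, hb, hbH, hbc⟩

/-- Let `R` be an Ore domain with a valuation `υ : R → G ∪ {∞}` for an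
ordered group `(G,<)` (encoded by `υ : R → G` on nonzero elements).  Then the set `H` of
nonzero homogeneous elements of the associated graded ring `gr_υ(R)` is an Ore subset of
`gr_υ(R)`: it is multiplicatively closed and satisfies the Ore condition. -/
theorem homogeneous_elements_ore_subset_of_graded
    (R : Type) [Ring R] [IsDomain R]
    -- `R` is a (left) Ore domain
    (hOre : ∀ a b : R, b ≠ 0 → ∃ c d : R, d ≠ 0 ∧ d * a = c * b)
    (G : Type) [Group G] [LinearOrder G]
    [CovariantClass G G (· * ·) (· < ·)]
    [CovariantClass G G (Function.swap (· * ·)) (· < ·)]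
    (υ : R → G)
    (hadd : ∀ x y : R, x ≠ 0 → y ≠ 0 → x + y ≠ 0 → min (υ x) (υ y) ≤ υ (x + y))
    (hmul : ∀ x y : R, x ≠ 0 → y ≠ 0 → υ (x * y) = υ x * υ y)
    -- the associated graded ring `gr_υ(R)` of the filtration induced by `υ`
    (A : Type) [Ring A] (φ : G → R → A)
    (hA : IsAssociatedGradedRing R G (fun g => {x : R | x = 0 ∨ g ≤ υ x}) A φ) :
    -- `H`, the set of nonzero homogeneous elements, is multiplicatively closed …
    (∀ a b : A, a ≠ 0 → b ≠ 0 →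
      (∃ g : G, ∃ x : R, (x = 0 ∨ g ≤ υ x) ∧ a = φ g x) →
      (∃ h : G, ∃ y : R, (y = 0 ∨ h ≤ υ y) ∧ b = φ h y) →
      a * b ≠ 0 ∧ ∃ l : G, ∃ z : R, (z = 0 ∨ l ≤ υ z) ∧ a * b = φ l z) ∧
    -- … and satisfies the Ore condition in `gr_υ(R)`
    (∀ a : A, a ≠ 0 → (∃ g : G, ∃ x : R, (x = 0 ∨ g ≤ υ x) ∧ a = φ g x) →
      ∀ f : A, ∃ b c : A, b ≠ 0 ∧
        (∃ h : G, ∃ y : R, (y = 0 ∨ h ≤ υ y) ∧ b = φ h y) ∧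
        b * f = c * a) :=
  homogeneous_elements_ore_subset_of_graded_general R hOre G υ hmul A φ hA
end

section
/- Let k be a field of characteristic ≠ 2 and H the Heisenberg Lie k-algebra with basis x, y, z where z = [y,x] and [x,z] = [y,z] = 0. If τ : H → H is a k-involution (k-linear, τ([a,b]) = [τ(b),τ(a)], τ² = id), then τ(z) = z or τ(z) = −z; moreover, if τ(z) = −z, then either τ(x) = x + cz, τ(y) = y + fz, τ(z) = −z for some c, f ∈ k, or τ(x) = −x, τ(y) = −y, τ(z) = −z. -/
/-- Let `k` be a field of characteristic `≠ 2` and `H` the Heisenberg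
Lie `k`-algebra, with basis `x, y, z` where `z = ⁅y, x⁆` and `⁅x, z⁆ = ⁅y, z⁆ = 0`.
If `τ : H → H` is a `k`-involution (`k`-linear, `τ ⁅a, b⁆ = ⁅τ b, τ a⁆`, `τ² = id`),
then `τ z = z` or `τ z = -z`; moreover if `τ z = -z`, then either
`τ x = x + c•z`, `τ y = y + f•z` for some `c, f ∈ k`, or `τ x = -x`, `τ y = -y`
(and `τ z = -z`). -/
theorem involution_heisenberg_classification_of_center_action
    (k : Type) [Field k] (hchar : (2 : k) ≠ 0)
    (H : Type) [LieRing H] [LieAlgebra k H]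
    (e : Module.Basis (Fin 3) k H)
    (x y z : H) (hx : e 0 = x) (hy : e 1 = y) (hzb : e 2 = z)
    (hz : ⁅y, x⁆ = z) (hxz : ⁅x, z⁆ = 0) (hyz : ⁅y, z⁆ = 0)
    (τ : H →ₗ[k] H)
    (hτ2 : ∀ a : H, τ (τ a) = a)
    (hτanti : ∀ a b : H, τ ⁅a, b⁆ = ⁅τ b, τ a⁆) :
    (τ z = z ∨ τ z = -z) ∧
    (τ z = -z →
      ((∃ c f : k, τ x = x + c • z ∧ τ y = y + f • z) ∨
        (τ x = -x ∧ τ y = -y ∧ τ z = -z))) := by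
  classical
  have hind : ∀ α β γ : k, α • x + β • y + γ • z = 0 → α = 0 ∧ β = 0 ∧ γ = 0 := by
    intro α β γ h
    have h2 : ∑ i, (![α, β, γ]) i • e i = 0 := by
      simp [Fin.sum_univ_three, hx, hy, hzb, h]
    have := Fintype.linearIndependent_iff.mp e.linearIndependent ![α, β, γ] h2
    exact ⟨this 0, this 1, this 2⟩
  set A := e.repr (τ x) 0 with hA
  set B := e.repr (τ x) 1 with hB'
  set C := e.repr (τ x) 2 with hC
  set D := e.repr (τ y) 0 with hD'
  set E := e.repr (τ y) 1 with hE
  set F := e.repr (τ y) 2 with hF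
  have hτx : τ x = A • x + B • y + C • z := by
    have := e.sum_repr (τ x)
    rw [Fin.sum_univ_three, hx, hy, hzb] at this
    exact this.symm
  have hτy : τ y = D • x + E • y + F • z := by
    have := e.sum_repr (τ y)
    rw [Fin.sum_univ_three, hx, hy, hzb] at this
    exact this.symm
  have hxy : ⁅x, y⁆ = -z := by rw [← lie_skew, hz]
  have hzx : ⁅z, x⁆ = 0 := by rw [← lie_skew, hxz, neg_zero]
  have hzy : ⁅z, y⁆ = 0 := by rw [← lie_skew, hyz, neg_zero]
  have hlam : τ z = (B * D - A * E) • z := by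
    have h1 := hτanti y x
    rw [hz, hτx, hτy] at h1
    rw [h1]
    simp only [lie_add, add_lie, lie_smul, smul_lie, hxy, hz, hzx, hzy, hxz, hyz,
      lie_self, smul_zero, zero_add, add_zero, smul_neg, smul_smul]
    module
  set L := B * D - A * E with hL
  have hL1 : L * L = 1 := by
    have hLL : (L * L) • z = z := by
      have := hτ2 z
      rw [hlam, map_smul, hlam, smul_smul] at this
      exact this
    have h0 : (L * L - 1) • z = 0 := by rw [sub_smul, one_smul, hLL, sub_self]
    exact sub_eq_zero.mp (hind 0 0 (L * L - 1) (by simpa using h0)).2.2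
  have hLpm : L = 1 ∨ L = -1 := mul_self_eq_one_iff.mp hL1
  constructor
  · rcases hLpm with h | h
    · left; rw [hlam, h, one_smul]
    · right; rw [hlam, h, neg_one_smul]
  · intro hneg
    -- L = -1
    have hLm : L = -1 := by
      rcases hLpm with h | h
      · exfalso
        rw [hlam, h, one_smul] at hneg
        have h0 : (0:k) • x + (0:k) • y + (2:k) • z = 0 := by
          have : z + z = 0 := by nth_rewrite 1 [hneg]; exact neg_add_cancel z
          rw [two_smul]; simpa using this
        exact hchar (hind 0 0 2 h0).2.2
      · exact h
    -- equations from τ² = id on x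
    have hex := hτ2 x
    rw [hτx, map_add, map_add, map_smul, map_smul, map_smul, hτx, hτy, hneg] at hex
    have hx0 : (A * A + B * D - 1) • x + (A * B + B * E) • y + (A * C + B * F - C) • z = 0 := by
      linear_combination (norm := module) hex
    obtain ⟨hx1, hx2, hx3⟩ := hind _ _ _ hx0
    have hey := hτ2 y
    rw [hτy, map_add, map_add, map_smul, map_smul, map_smul, hτx, hτy, hneg] at hey
    have hy0 : (A * D + D * E) • x + (B * D + E * E - 1) • y + (C * D + E * F - F) • z = 0 := by
      linear_combination (norm := module) hey
    obtain ⟨hy1, hy2, hy3⟩ := hind _ _ _ hy0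
    -- field algebra
    have hLm' : B * D - A * E = -1 := hLm
    have hAsum : A * (A + E) = 2 := by linear_combination hx1 - hLm'
    have hEsum : E * (A + E) = 2 := by linear_combination hy2 - hLm'
    have hsum_ne : A + E ≠ 0 := by
      intro h; apply hchar; rw [← hAsum, h, mul_zero]
    have hB0 : B = 0 := by
      rcases mul_eq_zero.mp (show B * (A + E) = 0 by linear_combination hx2) with h | h
      · exact h
      · exact absurd h hsum_ne
    have hD0 : D = 0 := by
      rcases mul_eq_zero.mp (show D * (A + E) = 0 by linear_combination hy1) with h | h
      · exact h
      · exact absurd h hsum_ne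
    have hAE : A * E = 1 := by linear_combination D * hB0 - hLm'
    have hA2 : A * A = 1 := by linear_combination hx1 - B * hD0
    have hEeqA : E = A := by linear_combination A * hAE - E * hA2
    rcases mul_self_eq_one_iff.mp hA2 with hA1 | hAm1
    · left
      refine ⟨C, F, ?_, ?_⟩
      · rw [hτx, hA1, hB0, one_smul, zero_smul, add_zero]
      · rw [hτy, hD0, hEeqA, hA1, one_smul, zero_smul, zero_add]
    · right
      have hE1 : E = -1 := by rw [hEeqA, hAm1]
      have hC0 : C = 0 := by
        have h2C : 2 * C = 0 := by linear_combination -hx3 + F * hB0 + C * hAm1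
        rcases mul_eq_zero.mp h2C with h | h
        · exact absurd h hchar
        · exact h
      have hF0 : F = 0 := by
        have h2F : 2 * F = 0 := by linear_combination -hy3 + C * hD0 + F * hE1
        rcases mul_eq_zero.mp h2F with h | h
        · exact absurd h hchar
        · exact h
      refine ⟨?_, ?_, hneg⟩
      · rw [hτx, hAm1, hB0, hC0, neg_one_smul, zero_smul, zero_smul, add_zero, add_zero]
      · rw [hτy, hD0, hE1, hF0, neg_one_smul, zero_smul, zero_smul, add_zero, zero_add]
end

section
/- Let k be a field of characteristic ≠ 2 and H the Heisenberg Lie k-algebra with basis x,y,z, z = [y,x] central. Every k-involution of H fixing z (τ(z)=z) is equivalent, via an automorphism of H, to the involution η with η(x) = x, η(y) = −y, η(z) = z. -/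
/-!
Split every element as `a = a₊ + a₋` with `τ a₊ = a₊`, `τ a₋ = -a₋` (possible since `2 ≠ 0`).
Every bracket of `H` is a multiple of `z`, hence fixed by `τ`, so `⁅τ b, τ a⁆ = ⁅a, b⁆`; this kills
brackets of two elements of the same eigenspace. As `⁅y, x⁆ ≠ 0`, some `⁅w, u⁆` with `τ u = u`,
`τ w = -w` is nonzero. Then `u, w, ⁅w, u⁆` satisfy the Heisenberg relations and form a basis, and
the change of basis `x ↦ u`, `y ↦ w`, `z ↦ ⁅w, u⁆` is an automorphism conjugating `τ` to `η`.
-/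

open Module

theorem LinearMap.map_lie_of_basis {R L L' ι : Type*} [CommRing R] [LieRing L] [LieAlgebra R L]
    [LieRing L'] [LieAlgebra R L'] (b : Basis ι R L) (f g : L →ₗ[R] L')
    (h : ∀ i j, f ⁅b i, b j⁆ = ⁅g (b i), g (b j)⁆) (a c : L) : f ⁅a, c⁆ = ⁅g a, g c⁆ := by
  have := LinearMap.ext_basis b b (B := (LieModule.toEnd R L L : L →ₗ[R] L →ₗ[R] L).compr₂ f)
    (B' := (LieModule.toEnd R L' L' : L' →ₗ[R] L' →ₗ[R] L').compl₁₂ g g) (by simpa using h)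
  simpa using congr($this a c)

theorem linearIndependent_lie_of_lie_ne_zero {K L : Type*} [Field K] [LieRing L] [LieAlgebra K L]
    {u w : L} (hwu : ⁅w, u⁆ ≠ 0) (hu : ⁅u, ⁅w, u⁆⁆ = 0) (hw : ⁅w, ⁅w, u⁆⁆ = 0) :
    LinearIndependent K ![u, w, ⁅w, u⁆] := by
  rw [Fintype.linearIndependent_iff]
  intro g hg
  simp only [Fin.sum_univ_three, Matrix.cons_val] at hg
  have hg₀ : g 0 = 0 := by simpa [hw, hwu] using congr(⁅w, $hg⁆)
  have hg₁ : g 1 = 0 := by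
    have hcu : ⁅⁅w, u⁆, u⁆ = 0 := by rw [← lie_skew, hu, neg_zero]
    simpa [hcu, hwu] using congr(⁅$hg, u⁆)
  have hg₂ : g 2 = 0 := by simpa [hg₀, hg₁, hwu] using hg
  intro i
  fin_cases i <;> assumption

theorem LinearMap.exists_eq_add_of_involutive {K V : Type*} [Field K] [AddCommGroup V] [Module K V]
    (h2 : (2 : K) ≠ 0) (τ : V →ₗ[K] V) (hτ : ∀ a, τ (τ a) = a) (a : V) :
    ∃ p m, τ p = p ∧ τ m = -m ∧ a = p + m := by
  refine ⟨(2⁻¹ : K) • (a + τ a), (2⁻¹ : K) • (a - τ a), ?_, ?_, ?_⟩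
  · simp [hτ, add_comm]
  · rw [map_smul, map_sub, hτ, ← smul_neg, neg_sub]
  · rw [← smul_add, add_add_sub_cancel, ← two_smul K, smul_smul, inv_mul_cancel₀ h2, one_smul]

theorem LinearMap.exists_lie_ne_zero_of_involutive {K L : Type*} [Field K] [LieRing L]
    [LieAlgebra K L] (h2 : (2 : K) ≠ 0) (τ : L →ₗ[K] L) (hτ2 : ∀ a, τ (τ a) = a)
    (hτ : ∀ a b, ⁅τ b, τ a⁆ = ⁅a, b⁆) {a b : L} (hab : ⁅b, a⁆ ≠ 0) :
    ∃ u w, τ u = u ∧ τ w = -w ∧ ⁅w, u⁆ ≠ 0 := by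
  have hsymm : ∀ p q : L, ⁅q, p⁆ = ⁅p, q⁆ → ⁅p, q⁆ = 0 := by
    intro p q hpq
    rw [← lie_skew, neg_eq_iff_add_eq_zero, ← two_smul K, smul_eq_zero] at hpq
    exact hpq.resolve_left h2
  obtain ⟨ap, am, hap, ham, rfl⟩ := τ.exists_eq_add_of_involutive h2 hτ2 a
  obtain ⟨bp, bm, hbp, hbm, rfl⟩ := τ.exists_eq_add_of_involutive h2 hτ2 b
  by_contra! h
  have hpp : ⁅bp, ap⁆ = 0 := hsymm _ _ (by simpa [hap, hbp] using hτ bp ap)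
  have hmm : ⁅bm, am⁆ = 0 := hsymm _ _ (by simpa [ham, hbm] using hτ bm am)
  have hpm : ⁅bp, am⁆ = 0 := by rw [← lie_skew, h _ _ hbp ham, neg_zero]
  exact hab (by simp [hpp, hmm, hpm, h _ _ hap hbm])

structure IsHeisenbergTriple {L : Type*} [LieRing L] (x y z : L) : Prop where
  lie_y_x : ⁅y, x⁆ = z
  lie_x_z : ⁅x, z⁆ = 0
  lie_y_z : ⁅y, z⁆ = 0

namespace IsHeisenbergTriple

def structConst : Matrix (Fin 3) (Fin 3) ℤ := !![0, -1, 0; 1, 0, 0; 0, 0, 0]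

variable {K L : Type*} [LieRing L] {x y z : L}

theorem lie_eq_zsmul (h : IsHeisenbergTriple x y z) (i j : Fin 3) :
    ⁅![x, y, z] i, ![x, y, z] j⁆ = structConst i j • z := by
  have hxy : ⁅x, y⁆ = -z := by rw [← lie_skew, h.lie_y_x]
  have hzx : ⁅z, x⁆ = 0 := by rw [← lie_skew, h.lie_x_z, neg_zero]
  have hzy : ⁅z, y⁆ = 0 := by rw [← lie_skew, h.lie_y_z, neg_zero]
  fin_cases i <;> fin_cases j <;> simp [structConst, h.lie_y_x, h.lie_x_z, h.lie_y_z, hxy, hzx, hzy]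

section CommRing

variable [CommRing K] [LieAlgebra K L] {e : Basis (Fin 3) K L}

theorem lie_lie_eq_zero (h : IsHeisenbergTriple x y z) (he : ⇑e = ![x, y, z]) (a b c : L) :
    ⁅a, ⁅b, c⁆⁆ = 0 := by
  have had_z : LieModule.toEnd K L L z = 0 := e.ext fun i => by
    fin_cases i <;> simp [he, ← lie_skew z, h.lie_x_z, h.lie_y_z]
  have hz : ⁅a, z⁆ = 0 := by
    rw [← lie_skew, ← LieModule.toEnd_apply_apply K, had_z, LinearMap.zero_apply, neg_zero]
  suffices ∀ i j, ⁅a, ⁅e i, e j⁆⁆ = 0 by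
    simpa using LinearMap.map_lie_of_basis e (LieModule.toEnd K L L a) 0 (by simpa using this) b c
  intro i j
  simp [he, h.lie_eq_zsmul, hz]

theorem map_lie_of_map_eq_self (h : IsHeisenbergTriple x y z) (he : ⇑e = ![x, y, z])
    (τ : L →ₗ[K] L) (hτz : τ z = z) (a b : L) : τ ⁅a, b⁆ = ⁅a, b⁆ :=
  LinearMap.map_lie_of_basis e τ LinearMap.id (fun i j => by simp [he, h.lie_eq_zsmul, hτz]) a b

end CommRing

theorem exists_lieEquiv [Field K] [LieAlgebra K L] {e : Basis (Fin 3) K L}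
    (h : IsHeisenbergTriple x y z) (he : ⇑e = ![x, y, z]) {u w : L} (hwu : ⁅w, u⁆ ≠ 0) : ∃ φ : L ≃ₗ⁅K⁆ L, φ x = u ∧ φ y = w ∧ φ z = ⁅w, u⁆ := by
  have huw : IsHeisenbergTriple u w ⁅w, u⁆ :=
    ⟨rfl, h.lie_lie_eq_zero he _ _ _, h.lie_lie_eq_zero he _ _ _⟩
  have hind := linearIndependent_lie_of_lie_ne_zero (K := K) hwu huw.lie_x_z huw.lie_y_z
  let e' := basisOfLinearIndependentOfCardEqFinrank hind (by simp [finrank_eq_card_basis e])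
  have he' : ⇑e' = ![u, w, ⁅w, u⁆] := coe_basisOfLinearIndependentOfCardEqFinrank _ _
  let φ := e.equiv e' (Equiv.refl _)
  have hφ : ∀ i, φ (![x, y, z] i) = ![u, w, ⁅w, u⁆] i := by
    rw [← he, ← he']
    exact fun i => e.equiv_apply i e' _
  have hφ_lie : ∀ a b, φ ⁅a, b⁆ = ⁅φ a, φ b⁆ :=
    LinearMap.map_lie_of_basis e φ.toLinearMap φ.toLinearMap fun i j => by
      simp only [LinearEquiv.coe_coe, he, hφ, h.lie_eq_zsmul, huw.lie_eq_zsmul, map_zsmul]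
      exact congrArg _ (hφ 2)
  exact ⟨{ φ with map_lie' := hφ_lie _ _ }, hφ 0, hφ 1, hφ 2⟩

end IsHeisenbergTriple

/-- Let `k` be a field of characteristic `≠ 2` and `H` the Heisenberg
Lie `k`-algebra with basis `x, y, z`, `z = ⁅y, x⁆` central.  Every `k`-involution `τ` of
`H` fixing `z` (`τ z = z`) is equivalent, via a Lie algebra automorphism `φ` of `H`
(so `φ⁻¹ ∘ τ ∘ φ = η`), to the involution `η` with `η x = x`, `η y = -y`, `η z = z`. -/
theorem involution_heisenberg_fixing_center_equivalent_to_standard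
    (k : Type) [Field k] (hchar : (2 : k) ≠ 0)
    (H : Type) [LieRing H] [LieAlgebra k H]
    (e : Module.Basis (Fin 3) k H)
    (x y z : H) (hx : e 0 = x) (hy : e 1 = y) (hzb : e 2 = z)
    (hz : ⁅y, x⁆ = z) (hxz : ⁅x, z⁆ = 0) (hyz : ⁅y, z⁆ = 0)
    (τ : H →ₗ[k] H)
    (hτ2 : ∀ a : H, τ (τ a) = a)
    (hτanti : ∀ a b : H, τ ⁅a, b⁆ = ⁅τ b, τ a⁆)
    (hτz : τ z = z) :
    ∃ φ : H ≃ₗ[k] H,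
      (∀ a b : H, φ ⁅a, b⁆ = ⁅φ a, φ b⁆) ∧
      -- `φ⁻¹ ∘ τ ∘ φ` is the involution `x ↦ x`, `y ↦ -y`, `z ↦ z`
      φ.symm (τ (φ x)) = x ∧ φ.symm (τ (φ y)) = -y ∧ φ.symm (τ (φ z)) = z := by
  have he : ⇑e = ![x, y, z] := by
    ext i
    fin_cases i <;> simp [hx, hy, hzb]
  have hH : IsHeisenbergTriple x y z := ⟨hz, hxz, hyz⟩
  have hτ_lie := hH.map_lie_of_map_eq_self he τ hτz
  have hyx : ⁅y, x⁆ ≠ 0 := hz ▸ hzb ▸ e.ne_zero 2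
  obtain ⟨u, w, hu, hw, hwu⟩ :=
    τ.exists_lie_ne_zero_of_involutive hchar hτ2 (fun a b => by rw [← hτanti, hτ_lie]) hyx
  obtain ⟨φ, hφx, hφy, hφz⟩ := hH.exists_lieEquiv he hwu
  refine ⟨φ.toLinearEquiv, φ.map_lie, ?_, ?_, ?_⟩ <;> rw [LinearEquiv.symm_apply_eq]
  · simp [hφx, hu]
  · simp [hφy, hw]
  · simp [hφz, hτ_lie]
end

section
/- Let k be a field of characteristic ≠ 2 and H the Heisenberg Lie k-algebra. Every k-involution of H is equivalent to exactly one of the following three: (1) x ↦ x, y ↦ −y, z ↦ z; (2) x ↦ x, y ↦ y, z ↦ −z; (3) x ↦ −x, y ↦ −y, z ↦ −z. -/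
/-!
Since `τ` reverses brackets, it preserves the centre `k z = ⁅H, H⁆` and acts on it by a sign
`ε = ±1`. As `2` is invertible, `H` is spanned by the `τ`-eigenvectors `a ± τ a`, and the bracket
`⁅v, u⁆` of eigenvectors with eigenvalues `α, β` is central with `τ ⁅v, u⁆ = -αβ ⁅v, u⁆`, so it
vanishes unless `ε = -αβ`. Because `⁅y, x⁆ ≠ 0`, some such pair has `⁅v, u⁆ ≠ 0`; then
`u, v, ⁅v, u⁆` is again a Heisenberg basis, and the automorphism `x, y, z ↦ u, v, ⁅v, u⁆`
conjugates `τ` to `x ↦ αx, y ↦ βy, z ↦ εz`, one of the three normal forms. These are pairwise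
inequivalent: automorphisms preserve `ε`, and only the third normal form is `-id`.
-/

/-- `τ` is equivalent, via a Lie algebra automorphism `φ` of `H` (i.e. `φ⁻¹∘τ∘φ` is the
involution determined on the basis `x, y, z` by the values `x', y', z'`). -/
def LieInvolutionEquivVia (k H : Type) [Field k] [LieRing H] [LieAlgebra k H]
    (τ : H →ₗ[k] H) (x y z x' y' z' : H) : Prop :=
  ∃ φ : H ≃ₗ[k] H, (∀ a b : H, φ ⁅a, b⁆ = ⁅φ a, φ b⁆) ∧
    φ.symm (τ (φ x)) = x' ∧ φ.symm (τ (φ y)) = y' ∧ φ.symm (τ (φ z)) = z'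

theorem eq_zero_of_neg_eq_of_two_ne_zero {k M : Type*} [Field k] [AddCommGroup M] [Module k M]
    (hchar : (2 : k) ≠ 0) {v : M} (h : -v = v) : v = 0 := by
  have h2 : (2 : k) • v = 0 := by
    rw [two_smul]; nth_rewrite 1 [← h]; exact neg_add_cancel v
  exact (smul_eq_zero.mp h2).resolve_left hchar

theorem apply_lie_of_apply_eq_smul {k H : Type*} [CommRing k] [LieRing H] [LieAlgebra k H]
    {τ : H →ₗ[k] H} (hτanti : ∀ a b : H, τ ⁅a, b⁆ = ⁅τ b, τ a⁆) {a b : H} {α β : k}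
    (ha : τ a = α • a) (hb : τ b = β • b) : τ ⁅b, a⁆ = -(α * β) • ⁅b, a⁆ := by
  rw [hτanti, ha, hb, smul_lie, lie_smul, ← lie_skew, smul_smul, smul_neg, neg_smul]

structure IsHeisenbergBasis {k H : Type*} [CommRing k] [LieRing H] [LieAlgebra k H]
    (e : Module.Basis (Fin 3) k H) : Prop where
  lie_one_zero : ⁅e 1, e 0⁆ = e 2
  lie_zero_two : ⁅e 0, e 2⁆ = 0
  lie_one_two : ⁅e 1, e 2⁆ = 0

namespace IsHeisenbergBasis

section CommRing

variable {k H : Type*} [CommRing k] [LieRing H] [LieAlgebra k H] {e : Module.Basis (Fin 3) k H}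

theorem lie_eq (he : IsHeisenbergBasis e) (a b : H) :
    ⁅a, b⁆ = (e.repr a 1 * e.repr b 0 - e.repr a 0 * e.repr b 1) • e 2 := by
  have h01 : ⁅e 0, e 1⁆ = -e 2 := by rw [← lie_skew, he.lie_one_zero]
  have h20 : ⁅e 2, e 0⁆ = 0 := by rw [← lie_skew, he.lie_zero_two, neg_zero]
  have h21 : ⁅e 2, e 1⁆ = 0 := by rw [← lie_skew, he.lie_one_two, neg_zero]
  conv_lhs => rw [← e.sum_repr a, ← e.sum_repr b]
  simp only [Fin.sum_univ_three, add_lie, lie_add, smul_lie, lie_smul, lie_self, he.lie_one_zero,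
    he.lie_zero_two, he.lie_one_two, h01, h20, h21]
  module

theorem lie_lie_left (he : IsHeisenbergBasis e) (a b c : H) : ⁅⁅a, b⁆, c⁆ = 0 := by
  rw [he.lie_eq a b, smul_lie, he.lie_eq (e 2) c]
  simp

theorem lie_lie_right (he : IsHeisenbergBasis e) (a b c : H) : ⁅c, ⁅a, b⁆⁆ = 0 := by
  rw [← lie_skew, he.lie_lie_left, neg_zero]

theorem equiv_map_lie (he : IsHeisenbergBasis e) {e' : Module.Basis (Fin 3) k H}
    (he' : IsHeisenbergBasis e') (a b : H) :
    e.equiv e' (Equiv.refl _) ⁅a, b⁆ =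
      ⁅e.equiv e' (Equiv.refl _) a, e.equiv e' (Equiv.refl _) b⁆ := by
  have hrepr (c : H) : e'.repr (e.equiv e' (Equiv.refl _) c) = e.repr c := by
    simp [Module.Basis.equiv]
  rw [he.lie_eq a b, he'.lie_eq, hrepr, hrepr, map_smul, e.equiv_apply, Equiv.refl_apply]

theorem apply_lie_eq_smul (he : IsHeisenbergBasis e) {τ : H →ₗ[k] H} {ε : k}
    (hε : τ (e 2) = ε • e 2) (a b : H) : τ ⁅a, b⁆ = ε • ⁅a, b⁆ := by
  rw [he.lie_eq, map_smul, hε, smul_comm]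

end CommRing

section Field

variable {k H : Type*} [Field k] [LieRing H] [LieAlgebra k H] {e : Module.Basis (Fin 3) k H}

theorem linearIndependent_of_lie_ne_zero (he : IsHeisenbergBasis e) {u v : H}
    (hvu : ⁅v, u⁆ ≠ 0) : LinearIndependent k ![u, v, ⁅v, u⁆] := by
  rw [Fintype.linearIndependent_iff]
  intro g hg
  simp only [Fin.sum_univ_three, Matrix.cons_val_zero, Matrix.cons_val_one,
    Matrix.cons_val_two, Matrix.head_cons, Matrix.tail_cons] at hg
  have h1 : g 1 • ⁅v, u⁆ = 0 := by
    simpa [he.lie_lie_left] using congrArg (⁅·, u⁆) hg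
  have h0 : g 0 • ⁅v, u⁆ = 0 := by
    have := congrArg (⁅·, v⁆) hg
    simp only [add_lie, smul_lie, lie_self, he.lie_lie_left, smul_zero, add_zero, zero_lie] at this
    rwa [← lie_skew, smul_neg, neg_eq_zero] at this
  have g1 : g 1 = 0 := (smul_eq_zero.mp h1).resolve_right hvu
  have g0 : g 0 = 0 := (smul_eq_zero.mp h0).resolve_right hvu
  have g2 : g 2 = 0 := by
    rw [g0, g1, zero_smul, zero_smul, zero_add, zero_add] at hg
    exact (smul_eq_zero.mp hg).resolve_right hvu
  intro i
  fin_cases i <;> assumption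

theorem exists_isHeisenbergBasis (he : IsHeisenbergBasis e) {u v : H} (hvu : ⁅v, u⁆ ≠ 0) :
    ∃ e' : Module.Basis (Fin 3) k H, IsHeisenbergBasis e' ∧ ⇑e' = ![u, v, ⁅v, u⁆] := by
  let e' := basisOfLinearIndependentOfCardEqFinrank (he.linearIndependent_of_lie_ne_zero hvu)
    (Module.finrank_eq_card_basis e).symm
  have he' : ⇑e' = ![u, v, ⁅v, u⁆] := coe_basisOfLinearIndependentOfCardEqFinrank _ _
  refine ⟨e', ⟨?_, ?_, ?_⟩, he'⟩ <;> simp [he', he.lie_lie_right]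

theorem exists_linearEquiv_map_lie_of_lie_ne_zero (he : IsHeisenbergBasis e) {u v : H}
    (hvu : ⁅v, u⁆ ≠ 0) :
    ∃ φ : H ≃ₗ[k] H, (∀ a b : H, φ ⁅a, b⁆ = ⁅φ a, φ b⁆) ∧
      φ (e 0) = u ∧ φ (e 1) = v ∧ φ (e 2) = ⁅v, u⁆ := by
  obtain ⟨e', he', hcoe⟩ := he.exists_isHeisenbergBasis hvu
  refine ⟨e.equiv e' (Equiv.refl _), he.equiv_map_lie he', ?_, ?_, ?_⟩ <;> simp [hcoe]

theorem exists_map_two_eq_smul (he : IsHeisenbergBasis e) {φ : H ≃ₗ[k] H}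
    (hφ : ∀ a b : H, φ ⁅a, b⁆ = ⁅φ a, φ b⁆) : ∃ m : k, m ≠ 0 ∧ φ (e 2) = m • e 2 := by
  obtain ⟨m, hφ2⟩ : ∃ m : k, φ (e 2) = m • e 2 :=
    ⟨_, by rw [← he.lie_one_zero, hφ, he.lie_eq, he.lie_one_zero]⟩
  refine ⟨m, fun hm => e.ne_zero 2 ?_, hφ2⟩
  rwa [hm, zero_smul, LinearEquiv.map_eq_zero_iff] at hφ2

variable {τ : H →ₗ[k] H}

theorem exists_apply_two_eq_smul (he : IsHeisenbergBasis e) (hτ2 : ∀ a : H, τ (τ a) = a)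
    (hτanti : ∀ a b : H, τ ⁅a, b⁆ = ⁅τ b, τ a⁆) :
    ∃ ε : k, (ε = 1 ∨ ε = -1) ∧ τ (e 2) = ε • e 2 := by
  obtain ⟨ε, hε⟩ : ∃ ε : k, τ (e 2) = ε • e 2 :=
    ⟨_, by rw [← he.lie_one_zero, hτanti, he.lie_eq, he.lie_one_zero]⟩
  refine ⟨ε, mul_self_eq_one_iff.mp (smul_left_injective k (e.ne_zero 2) ?_), hε⟩
  change (ε * ε) • e 2 = (1 : k) • e 2
  rw [← smul_smul, ← hε, ← map_smul, ← hε, hτ2, one_smul]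

theorem lie_eq_zero_of_apply_eq_smul (he : IsHeisenbergBasis e)
    (hτanti : ∀ a b : H, τ ⁅a, b⁆ = ⁅τ b, τ a⁆) {ε : k} (hε : τ (e 2) = ε • e 2) {a b : H}
    {α β : k} (ha : τ a = α • a) (hb : τ b = β • b) (hεαβ : ε + α * β ≠ 0) : ⁅b, a⁆ = 0 := by
  have h := (he.apply_lie_eq_smul hε b a).symm.trans (apply_lie_of_apply_eq_smul hτanti ha hb)
  rw [neg_smul, eq_neg_iff_add_eq_zero, ← add_smul] at h
  exact (smul_eq_zero.mp h).resolve_left hεαβ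

end Field

section Involution

variable {k H : Type} [Field k] [LieRing H] [LieAlgebra k H] {e : Module.Basis (Fin 3) k H}
  {τ : H →ₗ[k] H}

theorem lieInvolutionEquivVia_of_apply_eq_smul (he : IsHeisenbergBasis e)
    (hτanti : ∀ a b : H, τ ⁅a, b⁆ = ⁅τ b, τ a⁆) {u v : H} (hvu : ⁅v, u⁆ ≠ 0) {α β : k}
    (hu : τ u = α • u) (hv : τ v = β • v) :
    LieInvolutionEquivVia k H τ (e 0) (e 1) (e 2) (α • e 0) (β • e 1) (-(α * β) • e 2) := by
  obtain ⟨φ, hφ, hφ0, hφ1, hφ2⟩ := he.exists_linearEquiv_map_lie_of_lie_ne_zero hvu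
  refine ⟨φ, hφ, ?_, ?_, ?_⟩ <;> rw [LinearEquiv.symm_apply_eq, map_smul]
  · rw [hφ0, hu]
  · rw [hφ1, hv]
  · rw [hφ2, apply_lie_of_apply_eq_smul hτanti hu hv]

theorem exists_lieInvolutionEquivVia (hchar : (2 : k) ≠ 0) (he : IsHeisenbergBasis e)
    (hτ2 : ∀ a : H, τ (τ a) = a) (hτanti : ∀ a b : H, τ ⁅a, b⁆ = ⁅τ b, τ a⁆) :
    LieInvolutionEquivVia k H τ (e 0) (e 1) (e 2) (e 0) (-e 1) (e 2) ∨
      LieInvolutionEquivVia k H τ (e 0) (e 1) (e 2) (e 0) (e 1) (-e 2) ∨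
      LieInvolutionEquivVia k H τ (e 0) (e 1) (e 2) (-e 0) (-e 1) (-e 2) := by
  have hfix (a : H) : τ (a + τ a) = (1 : k) • (a + τ a) := by
    rw [map_add, hτ2, one_smul, add_comm]
  have hflip (a : H) : τ (a - τ a) = (-1 : k) • (a - τ a) := by
    rw [map_sub, hτ2, neg_one_smul, neg_sub]
  set xp := e 0 + τ (e 0)
  set xm := e 0 - τ (e 0)
  set yp := e 1 + τ (e 1)
  set ym := e 1 - τ (e 1)
  have hsum : ⁅yp, xp⁆ + ⁅yp, xm⁆ + ⁅ym, xp⁆ + ⁅ym, xm⁆ ≠ 0 := by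
    have hx : xp + xm = (2 : k) • e 0 := by module
    have hy : yp + ym = (2 : k) • e 1 := by module
    calc ⁅yp, xp⁆ + ⁅yp, xm⁆ + ⁅ym, xp⁆ + ⁅ym, xm⁆ = ⁅yp + ym, xp + xm⁆ := by
          simp only [add_lie, lie_add]; abel
      _ = (2 * 2 : k) • e 2 := by
          rw [hx, hy, smul_lie, lie_smul, he.lie_one_zero, smul_smul]
      _ ≠ 0 := smul_ne_zero (mul_ne_zero hchar hchar) (e.ne_zero 2)
  obtain ⟨ε, rfl | rfl, hε⟩ := he.exists_apply_two_eq_smul hτ2 hτanti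
  · left
    have hpp : ⁅yp, xp⁆ = 0 :=
      he.lie_eq_zero_of_apply_eq_smul hτanti hε (hfix _) (hfix _) (by norm_num [hchar])
    have hmm : ⁅ym, xm⁆ = 0 :=
      he.lie_eq_zero_of_apply_eq_smul hτanti hε (hflip _) (hflip _) (by norm_num [hchar])
    by_cases hmp : ⁅ym, xp⁆ = 0
    · have hpm : ⁅xm, yp⁆ ≠ 0 := by
        rw [← lie_skew, neg_ne_zero]
        simpa [hpp, hmm, hmp] using hsum
      simpa using he.lieInvolutionEquivVia_of_apply_eq_smul hτanti hpm (hfix _) (hflip _)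
    · simpa using he.lieInvolutionEquivVia_of_apply_eq_smul hτanti hmp (hfix _) (hflip _)
  · right
    have hpm : ⁅yp, xm⁆ = 0 :=
      he.lie_eq_zero_of_apply_eq_smul hτanti hε (hflip _) (hfix _) (by norm_num [hchar])
    have hmp : ⁅ym, xp⁆ = 0 :=
      he.lie_eq_zero_of_apply_eq_smul hτanti hε (hfix _) (hflip _) (by norm_num [hchar])
    by_cases hmm : ⁅ym, xm⁆ = 0
    · have hpp : ⁅yp, xp⁆ ≠ 0 := by simpa [hpm, hmp, hmm] using hsum
      left
      simpa using he.lieInvolutionEquivVia_of_apply_eq_smul hτanti hpp (hfix _) (hfix _)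
    · right
      simpa using he.lieInvolutionEquivVia_of_apply_eq_smul hτanti hmm (hflip _) (hflip _)

theorem apply_two_of_lieInvolutionEquivVia (he : IsHeisenbergBasis e) {x' y' : H} {c : k}
    (h : LieInvolutionEquivVia k H τ (e 0) (e 1) (e 2) x' y' (c • e 2)) :
    τ (e 2) = c • e 2 := by
  obtain ⟨φ, hφ, -, -, h2⟩ := h
  obtain ⟨m, hm, hφ2⟩ := he.exists_map_two_eq_smul hφ
  rw [LinearEquiv.symm_apply_eq, map_smul, hφ2, map_smul, smul_comm] at h2
  exact smul_right_injective H hm h2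

end Involution

end IsHeisenbergBasis

section Involution

variable {k H : Type} [Field k] [LieRing H] [LieAlgebra k H] {τ : H →ₗ[k] H}

theorem eq_neg_of_lieInvolutionEquivVia_neg {e : Module.Basis (Fin 3) k H}
    (h : LieInvolutionEquivVia k H τ (e 0) (e 1) (e 2) (-e 0) (-e 1) (-e 2)) (a : H) :
    τ a = -a := by
  obtain ⟨φ, -, h0, h1, h2⟩ := h
  have hconj : φ.symm.toLinearMap ∘ₗ τ ∘ₗ φ.toLinearMap = -LinearMap.id :=
    e.ext fun i => by fin_cases i <;> simpa
  simpa [LinearEquiv.symm_apply_eq] using LinearMap.congr_fun hconj (φ.symm a)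

theorem not_lieInvolutionEquivVia_of_eq_neg (hchar : (2 : k) ≠ 0) (hτ : ∀ a, τ a = -a)
    {x y z y' z' : H} (hx : x ≠ 0) : ¬LieInvolutionEquivVia k H τ x y z x y' z' := by
  rintro ⟨φ, -, h, -⟩
  rw [hτ, map_neg, LinearEquiv.symm_apply_apply] at h
  exact hx (eq_zero_of_neg_eq_of_two_ne_zero hchar h)

end Involution

/-- Let `k` be a field of characteristic `≠ 2` and `H` the Heisenberg
Lie `k`-algebra (basis `x, y, z`, `⁅y, x⁆ = z`, `⁅x, z⁆ = ⁅y, z⁆ = 0`).  Every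
`k`-involution of `H` is equivalent, via an automorphism of `H`, to exactly one of the
three involutions: (1) `x ↦ x, y ↦ -y, z ↦ z`; (2) `x ↦ x, y ↦ y, z ↦ -z`;
(3) `x ↦ -x, y ↦ -y, z ↦ -z`. -/
theorem involution_heisenberg_equivalent_to_exactly_one_of_three
    (k : Type) [Field k] (hchar : (2 : k) ≠ 0)
    (H : Type) [LieRing H] [LieAlgebra k H]
    (e : Module.Basis (Fin 3) k H)
    (x y z : H) (hx : e 0 = x) (hy : e 1 = y) (hzb : e 2 = z)
    (hz : ⁅y, x⁆ = z) (hxz : ⁅x, z⁆ = 0) (hyz : ⁅y, z⁆ = 0)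
    (τ : H →ₗ[k] H)
    (hτ2 : ∀ a : H, τ (τ a) = a)
    (hτanti : ∀ a b : H, τ ⁅a, b⁆ = ⁅τ b, τ a⁆) :
    (LieInvolutionEquivVia k H τ x y z x (-y) z ∨
      LieInvolutionEquivVia k H τ x y z x y (-z) ∨
      LieInvolutionEquivVia k H τ x y z (-x) (-y) (-z)) ∧
    ¬(LieInvolutionEquivVia k H τ x y z x (-y) z ∧
        LieInvolutionEquivVia k H τ x y z x y (-z)) ∧
    ¬(LieInvolutionEquivVia k H τ x y z x (-y) z ∧
        LieInvolutionEquivVia k H τ x y z (-x) (-y) (-z)) ∧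
    ¬(LieInvolutionEquivVia k H τ x y z x y (-z) ∧
        LieInvolutionEquivVia k H τ x y z (-x) (-y) (-z)) := by
  subst hx hy hzb
  have he : IsHeisenbergBasis e := ⟨hz, hxz, hyz⟩
  refine ⟨he.exists_lieInvolutionEquivVia hchar hτ2 hτanti, fun ⟨h1, h2⟩ => ?_,
    fun ⟨h1, h3⟩ => ?_, fun ⟨h2, h3⟩ => ?_⟩
  · have hfix : τ (e 2) = (1 : k) • e 2 :=
      he.apply_two_of_lieInvolutionEquivVia (by rwa [one_smul])
    have hflip : τ (e 2) = (-1 : k) • e 2 :=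
      he.apply_two_of_lieInvolutionEquivVia (by rwa [neg_one_smul])
    refine e.ne_zero 2 (eq_zero_of_neg_eq_of_two_ne_zero hchar ?_)
    rw [← neg_one_smul k, ← hflip, hfix, one_smul]
  · exact not_lieInvolutionEquivVia_of_eq_neg hchar (eq_neg_of_lieInvolutionEquivVia_neg h3)
      (e.ne_zero 0) h1
  · exact not_lieInvolutionEquivVia_of_eq_neg hchar (eq_neg_of_lieInvolutionEquivVia_neg h3)
      (e.ne_zero 0) h2
end

section
/- Let k be a field of characteristic ≠ 2 and L a finitely generated nonabelian nilpotent Lie k-algebra of nilpotency class 2 with a k-involution *. Then there exist x, y ∈ L with [y,x] ≠ 0, [y,[y,x]] = [x,[y,x]] = 0, and either (x* = x and y* = −y), or (x* = x and y* = y), or (x* = −x and y* = −y). -/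
/-- Let `k` be a field of characteristic `≠ 2` and `L` a finitely
generated nonabelian nilpotent Lie `k`-algebra of nilpotency class 2 (`[L,[L,L]] = 0`,
`[L,L] ≠ 0`) with a `k`-involution `*`.  Then there exist `x, y ∈ L` with `⁅y, x⁆ ≠ 0`,
`⁅y, ⁅y, x⁆⁆ = ⁅x, ⁅y, x⁆⁆ = 0`, and either (`x* = x` and `y* = -y`), or (`x* = x` and
`y* = y`), or (`x* = -x` and `y* = -y`).  (In particular, `x` and `y` generate a
`*`-invariant Heisenberg Lie subalgebra of `L`.) -/
theorem involution_nilpotent_class_two_heisenberg_pair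
    (k : Type) [Field k] (hchar : (2 : k) ≠ 0)
    (L : Type) [LieRing L] [LieAlgebra k L]
    -- finitely generated
    (hfg : ∃ S : Finset L, LieSubalgebra.lieSpan k L (S : Set L) = ⊤)
    -- nonabelian
    (hna : ∃ a b : L, ⁅a, b⁆ ≠ 0)
    -- nilpotency class 2: `[L, [L, L]] = 0`
    (hclass2 : ∀ a b c : L, ⁅a, ⁅b, c⁆⁆ = 0)
    -- a `k`-involution
    (τ : L →ₗ[k] L)
    (hτ2 : ∀ a : L, τ (τ a) = a)
    (hτanti : ∀ a b : L, τ ⁅a, b⁆ = ⁅τ b, τ a⁆) :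
    ∃ x y : L, ⁅y, x⁆ ≠ 0 ∧ ⁅y, ⁅y, x⁆⁆ = 0 ∧ ⁅x, ⁅y, x⁆⁆ = 0 ∧
      ((τ x = x ∧ τ y = -y) ∨ (τ x = x ∧ τ y = y) ∨ (τ x = -x ∧ τ y = -y)) := by
  obtain ⟨a, b, hab⟩ := hna
  set s := a + τ a with hs
  set t := a - τ a with ht
  set u := b + τ b with hu
  set v := b - τ b with hv
  have hτs : τ s = s := by simp [hs, map_add, hτ2, add_comm]
  have hτt : τ t = -t := by simp [ht, map_sub, hτ2]
  have hτu : τ u = u := by simp [hu, map_add, hτ2, add_comm]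
  have hτv : τ v = -v := by simp [hv, map_sub, hτ2]
  have h2a : s + t = (2 : k) • a := by rw [hs, ht, two_smul]; abel
  have h2b : u + v = (2 : k) • b := by rw [hu, hv, two_smul]; abel
  clear_value s t u v
  have hkey : ⁅s, u⁆ + ⁅s, v⁆ + ⁅t, u⁆ + ⁅t, v⁆ ≠ 0 := by
    have : ⁅s, u⁆ + ⁅s, v⁆ + ⁅t, u⁆ + ⁅t, v⁆ = ⁅s + t, u + v⁆ := by
      rw [add_lie, lie_add, lie_add]; abel
    rw [this, h2a, h2b, smul_lie, lie_smul, smul_smul]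
    intro h
    apply hab
    rcases smul_eq_zero.mp h with h' | h'
    · exact absurd h' (mul_ne_zero hchar hchar)
    · exact h'
  have hC : ⁅s, u⁆ ≠ 0 ∨ ⁅s, v⁆ ≠ 0 ∨ ⁅t, u⁆ ≠ 0 ∨ ⁅t, v⁆ ≠ 0 := by
    by_contra h
    push_neg at h
    obtain ⟨h1, h2, h3, h4⟩ := h
    exact hkey (by rw [h1, h2, h3, h4]; abel)
  rcases hC with h | h | h | h
  · -- both fixed: x = u, y = s
    exact ⟨u, s, h, hclass2 _ _ _, hclass2 _ _ _, Or.inr (Or.inl ⟨hτu, hτs⟩)⟩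
  · -- x = s (fixed), y = v (anti); ⁅v, s⁆ = -⁅s, v⁆ ≠ 0
    refine ⟨s, v, ?_, hclass2 _ _ _, hclass2 _ _ _, Or.inl ⟨hτs, hτv⟩⟩
    intro hz
    apply h
    rw [← neg_eq_zero, lie_skew, hz]
  · -- x = u (fixed), y = t (anti)
    exact ⟨u, t, h, hclass2 _ _ _, hclass2 _ _ _, Or.inl ⟨hτu, hτt⟩⟩
  · -- both anti: x = v, y = t
    exact ⟨v, t, h, hclass2 _ _ _, hclass2 _ _ _, Or.inr (Or.inr ⟨hτv, hτt⟩)⟩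
end

section
/- Let k be a field of characteristic ≠ 2 and L any nonabelian nilpotent Lie k-algebra with a k-involution *. Then there exist x, y ∈ L with [y,x] ≠ 0, [y,[y,x]] = [x,[y,x]] = 0, and either (x* = x, y* = −y), or (x* = x, y* = y), or (x* = −x, y* = −y). -/
/-!
Take the last nonzero term `⁅L, C_p⁆` of the lower central series: it is central, and `C_p` is
stable under `*` because `-*` is a Lie algebra endomorphism. Splitting `a ∈ L` and `b ∈ C_p` with
`⁅a, b⁆ ≠ 0` into `±1`-eigencomponents of `*` (possible as `2` is invertible), some pair of
components still has a nonzero bracket, which is central; up to swapping the two elements this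
pair realises one of the three sign patterns.
-/

namespace LieModule

variable {R L M : Type*} [CommRing R] [LieRing L] [LieAlgebra R L]
  [AddCommGroup M] [Module R M] [LieRingModule L M] [LieModule R L M]

theorem exists_lie_ne_zero_forall_lie_mem_maxTrivSubmodule [IsNilpotent L M]
    (h : ¬ IsTrivial L M) :
    ∃ p, (∃ x : L, ∃ m ∈ lowerCentralSeries R L M p, ⁅x, m⁆ ≠ 0) ∧
      ∀ x : L, ∀ m ∈ lowerCentralSeries R L M p, ⁅x, m⁆ ∈ maxTrivSubmodule R L M := by
  have hlen : 2 ≤ nilpotencyLength L M := by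
    by_contra! hlt
    exact h (isTrivial_of_nilpotencyLength_le_one L M (by omega))
  obtain ⟨p, hp⟩ : ∃ p, nilpotencyLength L M = p + 1 + 1 := ⟨_, (Nat.sub_add_cancel hlen).symm⟩
  obtain ⟨hlast, hne⟩ := (nilpotencyLength_eq_succ_iff R L M (p + 1)).mp hp
  rw [lowerCentralSeries_succ] at hlast hne
  refine ⟨p, ?_, fun x m hm y => ?_⟩
  · contrapose! hne
    exact (LieSubmodule.lie_eq_bot_iff _ _).mpr fun x _ m hm => hne x m hm
  · rw [lowerCentralSeries_succ, LieSubmodule.lie_eq_bot_iff] at hlast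
    exact hlast y trivial _ (LieSubmodule.lie_mem_lie (LieSubmodule.mem_top x) hm)

end LieModule

section Involution

theorem exists_add_eq_of_involutive {R V : Type*} [Ring R] [Invertible (2 : R)]
    [AddCommGroup V] [Module R V] (τ : V →ₗ[R] V) (hτ : ∀ v, τ (τ v) = v)
    (S : Submodule R V) (hS : ∀ v ∈ S, τ v ∈ S) {w : V} (hw : w ∈ S) :
    ∃ u ∈ S, ∃ v ∈ S, τ u = u ∧ τ v = -v ∧ u + v = w := by
  refine ⟨⅟2 • (w + τ w), S.smul_mem _ (S.add_mem hw (hS w hw)),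
    ⅟2 • (w - τ w), S.smul_mem _ (S.sub_mem hw (hS w hw)), ?_, ?_, ?_⟩
  · rw [map_smul, map_add, hτ, add_comm]
  · rw [map_smul, map_sub, hτ, ← smul_neg, neg_sub]
  · rw [← smul_add, add_add_sub_cancel, ← two_smul R, smul_smul, invOf_mul_self, one_smul]

variable {R L : Type*} [Ring R] [Invertible (2 : R)] [LieRing L] [Module R L]

theorem exists_lie_ne_zero_of_involutive (τ : L →ₗ[R] L) (hτ : ∀ v, τ (τ v) = v)
    (S : Submodule R L) (hS : ∀ v ∈ S, τ v ∈ S) {a b : L} (hb : b ∈ S) (hab : ⁅a, b⁆ ≠ 0) :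
    ∃ u v, v ∈ S ∧ ⁅u, v⁆ ≠ 0 ∧ (τ u = u ∨ τ u = -u) ∧ (τ v = v ∨ τ v = -v) := by
  obtain ⟨a₁, -, a₂, -, ha₁, ha₂, rfl⟩ :=
    exists_add_eq_of_involutive τ hτ ⊤ (fun _ _ => trivial) (Submodule.mem_top (x := a))
  obtain ⟨b₁, hb₁S, b₂, hb₂S, hb₁, hb₂, rfl⟩ := exists_add_eq_of_involutive τ hτ S hS hb
  have hsplit : ⁅a₁, b₁⁆ ≠ 0 ∨ ⁅a₁, b₂⁆ ≠ 0 ∨ ⁅a₂, b₁⁆ ≠ 0 ∨ ⁅a₂, b₂⁆ ≠ 0 := by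
    contrapose! hab
    simp [hab]
  rcases hsplit with h | h | h | h
  exacts [⟨a₁, b₁, hb₁S, h, .inl ha₁, .inl hb₁⟩, ⟨a₁, b₂, hb₂S, h, .inl ha₁, .inr hb₂⟩,
    ⟨a₂, b₁, hb₁S, h, .inr ha₂, .inl hb₁⟩, ⟨a₂, b₂, hb₂S, h, .inr ha₂, .inr hb₂⟩]

end Involution

theorem LieAlgebra.apply_mem_lowerCentralSeries_of_anti {R L L' : Type*} [CommRing R]
    [LieRing L] [LieAlgebra R L] [LieRing L'] [LieAlgebra R L'] (τ : L →ₗ[R] L')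
    (hτ : ∀ a b, τ ⁅a, b⁆ = ⁅τ b, τ a⁆) {p : ℕ} {x : L}
    (hx : x ∈ LieModule.lowerCentralSeries R L L p) :
    τ x ∈ LieModule.lowerCentralSeries R L' L' p := by
  let σ : L →ₗ⁅R⁆ L' :=
    { toLinearMap := -τ
      map_lie' := fun {a b} => by
        change -τ ⁅a, b⁆ = ⁅-τ a, -τ b⁆
        rw [hτ, neg_lie, lie_neg, neg_neg, lie_skew] }
  have hσx : -τ x ∈ LieModule.lowerCentralSeries R L' L' p :=
    LieIdeal.map_lowerCentralSeries_le p (LieIdeal.mem_map (f := σ) hx)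
  simpa using neg_mem hσx

/-- Let `k` be a field of characteristic `≠ 2` and `L` any nonabelian
nilpotent Lie `k`-algebra with a `k`-involution `*`.  Then there exist `x, y ∈ L` with
`⁅y, x⁆ ≠ 0`, `⁅y, ⁅y, x⁆⁆ = ⁅x, ⁅y, x⁆⁆ = 0`, and either (`x* = x`, `y* = -y`), or
(`x* = x`, `y* = y`), or (`x* = -x`, `y* = -y`).  (The elements `x, y` span with
`⁅y, x⁆` a `*`-invariant copy of the Heisenberg Lie algebra inside `L`.) -/
theorem involution_nilpotent_heisenberg_pair
    (k : Type) [Field k] (hchar : (2 : k) ≠ 0)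
    (L : Type) [LieRing L] [LieAlgebra k L]
    [LieRing.IsNilpotent L]
    -- nonabelian
    (hna : ∃ a b : L, ⁅a, b⁆ ≠ 0)
    -- a `k`-involution
    (τ : L →ₗ[k] L)
    (hτ2 : ∀ a : L, τ (τ a) = a)
    (hτanti : ∀ a b : L, τ ⁅a, b⁆ = ⁅τ b, τ a⁆) :
    ∃ x y : L, ⁅y, x⁆ ≠ 0 ∧ ⁅y, ⁅y, x⁆⁆ = 0 ∧ ⁅x, ⁅y, x⁆⁆ = 0 ∧
      ((τ x = x ∧ τ y = -y) ∨ (τ x = x ∧ τ y = y) ∨ (τ x = -x ∧ τ y = -y)) := by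
  have : Invertible (2 : k) := invertibleOfNonzero hchar
  have hnontriv : ¬ LieModule.IsTrivial L L := fun h => by
    obtain ⟨a, b, hab⟩ := hna
    exact hab (h.trivial a b)
  obtain ⟨p, ⟨a, b, hb, hab⟩, hcentral⟩ :=
    LieModule.exists_lie_ne_zero_forall_lie_mem_maxTrivSubmodule (R := k) hnontriv
  obtain ⟨u, v, hv, huv, hu, hv'⟩ := exists_lie_ne_zero_of_involutive τ hτ2
    (LieModule.lowerCentralSeries k L L p).toSubmodule
    (fun _ => LieAlgebra.apply_mem_lowerCentralSeries_of_anti τ hτanti) hb hab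
  have hz : ∀ w : L, ⁅w, ⁅u, v⁆⁆ = 0 := hcentral u v hv
  have hvu : ⁅v, u⁆ ≠ 0 := by rwa [← lie_skew v u, neg_ne_zero]
  have hz' : ∀ w : L, ⁅w, ⁅v, u⁆⁆ = 0 := fun w => by rw [← lie_skew v u, lie_neg, hz, neg_zero]
  rcases hu with hu | hu <;> rcases hv' with hv' | hv'
  · exact ⟨u, v, hvu, hz' v, hz' u, .inr (.inl ⟨hu, hv'⟩)⟩
  · exact ⟨u, v, hvu, hz' v, hz' u, .inl ⟨hu, hv'⟩⟩
  · exact ⟨v, u, huv, hz u, hz v, .inl ⟨hv', hu⟩⟩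
  · exact ⟨u, v, hvu, hz' v, hz' u, .inr (.inr ⟨hu, hv'⟩)⟩
end

section
/- Let G be a nonabelian torsion-free nilpotent group with an involution * : G → G (anti-automorphism of order 2). Then G contains elements x, y with (x,y) ≠ 1, (x,(x,y)) = (y,(x,y)) = 1, x* = x^{±1} and y* = y^{±1}; i.e. G contains a *-invariant subgroup isomorphic to the discrete Heisenberg group on which * restricts to one of the three main involutions. -/
/-!
Twisting `σ` by inversion gives an automorphism `τ g = (σ g)⁻¹` of order two, and `σ x = x^{±1}`
exactly when `τ x = x^{∓1}`.

Let `φ` be a homomorphism to a torsion-free abelian group with `φ g ≠ 1`. If `φ (g * τ g) = 1`,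
then `τ` inverts `g * (τ g)⁻¹` and `φ` sends it to `φ g ^ 2 ≠ 1`. Otherwise iterate `w ↦ w * τ w`
from `g`: the defect `w⁻¹ * τ w` of the `k`-th iterate lies in the `k`-th term of the lower central
series, so some iterate is fixed by `τ`, while `φ` of the iterates is just repeatedly squared.

Pick `x₀` in the second center and `g₀` not commuting with it. Applying this to `z ↦ ⁅z, g₀⁆` on
the second center yields `x`; applying it to `g ↦ ⁅x, g⁆` on `G` yields `y`. Both maps are
homomorphisms into the center because `x₀` and `x` lie in the second center.
-/

open scoped commutatorElement IsMulCommutative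

section Involution

variable {H : Type*} [Group H] {τ : H →* H}

variable (τ) in
def mulMapIter (g : H) : ℕ → H
  | 0 => g
  | k + 1 => mulMapIter g k * τ (mulMapIter g k)

lemma inv_mul_map_mulMapIter_succ (hτ : Function.Involutive τ) (g : H) (k : ℕ) :
    (mulMapIter τ g (k + 1))⁻¹ * τ (mulMapIter τ g (k + 1)) =
      ⁅((mulMapIter τ g k)⁻¹ * τ (mulMapIter τ g k))⁻¹, (mulMapIter τ g k)⁻¹⁆ := by
  simp only [mulMapIter, map_mul, hτ _, commutatorElement_def]
  group

lemma inv_mul_map_mulMapIter_mem_lowerCentralSeries (hτ : Function.Involutive τ) (g : H)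
    (k : ℕ) :
    (mulMapIter τ g k)⁻¹ * τ (mulMapIter τ g k) ∈ (⊤ : Subgroup H).lowerCentralSeries k := by
  induction k with
  | zero => trivial
  | succ k ih =>
    rw [inv_mul_map_mulMapIter_succ hτ]
    exact Subgroup.commutator_mem_commutator (inv_mem ih) trivial

lemma map_mulMapIter_eq_self [Group.IsNilpotent H] (hτ : Function.Involutive τ) (g : H)
    {k : ℕ} (hk : Group.nilpotencyClass H ≤ k) : τ (mulMapIter τ g k) = mulMapIter τ g k := by
  have h := inv_mul_map_mulMapIter_mem_lowerCentralSeries hτ g k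
  rwa [Subgroup.lowerCentralSeries_eq_bot_iff_nilpotencyClass_le.mpr hk, Subgroup.mem_bot,
    inv_mul_eq_one, eq_comm] at h

lemma map_mulMapIter_succ {A : Type*} [CommGroup A] (hτ : Function.Involutive τ) (φ : H →* A)
    (g : H) (k : ℕ) : φ (mulMapIter τ g (k + 1)) = φ (mulMapIter τ g 1) ^ 2 ^ k := by
  induction k with
  | zero => simp
  | succ k ih =>
    -- `τ` swaps the two factors of `w * τ w`, which `φ` cannot tell apart.
    have hsymm : φ (τ (mulMapIter τ g (k + 1))) = φ (mulMapIter τ g (k + 1)) := by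
      rw [mulMapIter, map_mul, hτ, map_mul, map_mul, mul_comm]
    rw [mulMapIter, map_mul, hsymm, ih, ← pow_two, ← pow_mul, pow_succ]

theorem exists_map_eq_self_or_inv_and_ne_one [Group.IsNilpotent H] {A : Type*} [CommGroup A]
    [IsMulTorsionFree A] (hτ : Function.Involutive τ) (φ : H →* A) {g : H} (hg : φ g ≠ 1) :
    ∃ y, (τ y = y ∨ τ y = y⁻¹) ∧ φ y ≠ 1 := by
  by_cases hgτ : φ (g * τ g) = 1
  · refine ⟨g * (τ g)⁻¹, Or.inr ?_, ?_⟩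
    · rw [map_mul, map_inv, hτ, mul_inv_rev, inv_inv]
    · have : φ (τ g) = (φ g)⁻¹ := eq_inv_of_mul_eq_one_right (by rwa [← map_mul])
      rwa [map_mul, map_inv, this, inv_inv, ← pow_two, Ne, sq_eq_one]
  · refine ⟨mulMapIter τ g (Group.nilpotencyClass H + 1),
      Or.inl (map_mulMapIter_eq_self hτ g (Nat.le_succ _)), ?_⟩
    rwa [map_mulMapIter_succ hτ, Ne, pow_eq_one_iff_left (by positivity)]

end Involution

section AntiInvolution

variable {G : Type*} [Group G] (σ : G → G) (hanti : ∀ a b, σ (a * b) = σ b * σ a)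
  (hinv : Function.Involutive σ)

def mulEquivMulOppositeOfAntiInvolution : G ≃* Gᵐᵒᵖ where
  toFun g := MulOpposite.op (σ g)
  invFun g := σ g.unop
  left_inv := hinv
  right_inv g := by simp [hinv g.unop]
  map_mul' a b := by simp [hanti]

def mulAutOfAntiInvolution : G ≃* G :=
  (mulEquivMulOppositeOfAntiInvolution σ hanti hinv).trans (MulEquiv.inv' G).symm

variable {σ hanti hinv}

lemma mulAutOfAntiInvolution_apply (g : G) : mulAutOfAntiInvolution σ hanti hinv g = (σ g)⁻¹ :=
  rfl

lemma mulAutOfAntiInvolution_involutive :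
    Function.Involutive (mulAutOfAntiInvolution σ hanti hinv) := by
  intro g
  have hσinv : σ (σ g)⁻¹ = (σ (σ g))⁻¹ :=
    MulOpposite.op_injective (map_inv (mulEquivMulOppositeOfAntiInvolution σ hanti hinv) (σ g))
  simp [mulAutOfAntiInvolution_apply, hσinv, hinv g]

def MulEquiv.restrictCharacteristic (τ : G ≃* G) (K : Subgroup G) [K.Characteristic] : K ≃* K :=
  (τ.subgroupMap K).trans (.subgroupCongr (Subgroup.characteristic_iff_map_eq.mp ‹_› τ))

@[simp]
lemma MulEquiv.coe_restrictCharacteristic_apply (τ : G ≃* G) (K : Subgroup G) [K.Characteristic]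
    (z : K) : (τ.restrictCharacteristic K z : G) = τ z :=
  rfl

end AntiInvolution

section SecondCenter

variable {G : Type*} [Group G]

lemma commutatorElement_mem_center_of_mem_upperCentralSeries_two {x : G}
    (hx : x ∈ Subgroup.upperCentralSeries G 2) (g : G) : ⁅x, g⁆ ∈ Subgroup.center G := by
  rw [← Subgroup.upperCentralSeries_one]
  exact Subgroup.mem_upperCentralSeries_succ_iff.mp hx g

@[simps]
def commutatorLeftHom (g : G) : Subgroup.upperCentralSeries G 2 →* Subgroup.center G where
  toFun z := ⟨⁅(z : G), g⁆, commutatorElement_mem_center_of_mem_upperCentralSeries_two z.2 g⟩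
  map_one' := by ext; simp
  map_mul' a b := by
    ext
    have hb := Subgroup.mem_center_iff.mp
      (commutatorElement_mem_center_of_mem_upperCentralSeries_two b.2 g)
    simp [commutatorElement_mul_left_eq_conj_mul, ← hb, mul_assoc]

@[simps]
def commutatorRightHom {x : G} (hx : x ∈ Subgroup.upperCentralSeries G 2) :
    G →* Subgroup.center G where
  toFun g := ⟨⁅x, g⁆, commutatorElement_mem_center_of_mem_upperCentralSeries_two hx g⟩
  map_one' := by ext; simp
  map_mul' a b := by
    ext
    have hb := Subgroup.mem_center_iff.mp
      (commutatorElement_mem_center_of_mem_upperCentralSeries_two hx b)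
    simp [commutatorElement_mul_right_eq_mul_conj, hb, mul_assoc]

lemma upperCentralSeries_le_center_of_upperCentralSeries_two_le
    (h : Subgroup.upperCentralSeries G 2 ≤ Subgroup.center G) (n : ℕ) :
    Subgroup.upperCentralSeries G n ≤ Subgroup.center G := by
  induction n with
  | zero => exact bot_le
  | succ n ih =>
    refine fun z hz => h (Subgroup.mem_upperCentralSeries_succ_iff.mpr fun g => ?_)
    rw [Subgroup.upperCentralSeries_one]
    exact ih (Subgroup.mem_upperCentralSeries_succ_iff.mp hz g)

lemma exists_mem_upperCentralSeries_two_commutatorElement_ne_one [Group.IsNilpotent G]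
    (hG : ∃ a b : G, a * b ≠ b * a) :
    ∃ x ∈ Subgroup.upperCentralSeries G 2, ∃ g : G, ⁅x, g⁆ ≠ 1 := by
  by_contra! h
  obtain ⟨a, b, hab⟩ := hG
  obtain ⟨n, hn⟩ := Group.IsNilpotent.nilpotent G
  have hle : Subgroup.upperCentralSeries G 2 ≤ Subgroup.center G := fun x hx =>
    Subgroup.mem_center_iff.mpr fun g => (commutatorElement_eq_one_iff_mul_comm.mp (h x hx g)).symm
  have ha : a ∈ Subgroup.center G :=
    upperCentralSeries_le_center_of_upperCentralSeries_two_le hle n (by rw [hn]; trivial)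
  exact hab (Subgroup.mem_center_iff.mp ha b).symm

lemma isMulTorsionFree_center (hG : ∀ g : G, g ≠ 1 → ¬IsOfFinOrder g) :
    IsMulTorsionFree (Subgroup.center G) :=
  .of_not_isOfFinOrder fun z hz hfin =>
    hG z (by simpa using hz) (Submonoid.isOfFinOrder_coe.mpr hfin)

lemma heisenberg_relations_of_mem_upperCentralSeries_two {x y : G}
    (hx : x ∈ Subgroup.upperCentralSeries G 2) (hxy : ⁅x, y⁆ ≠ 1) :
    x⁻¹ * y⁻¹ * x * y ≠ 1 ∧
      x⁻¹ * (x⁻¹ * y⁻¹ * x * y)⁻¹ * x * (x⁻¹ * y⁻¹ * x * y) = 1 ∧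
      y⁻¹ * (x⁻¹ * y⁻¹ * x * y)⁻¹ * y * (x⁻¹ * y⁻¹ * x * y) = 1 := by
  have hc : x⁻¹ * y⁻¹ * x * y = ⁅x⁻¹, y⁻¹⁆ := by simp [commutatorElement_def]
  have hcZ := Subgroup.mem_center_iff.mp
    (commutatorElement_mem_center_of_mem_upperCentralSeries_two (inv_mem hx) y⁻¹)
  have hcentral : ∀ g : G, g⁻¹ * (x⁻¹ * y⁻¹ * x * y)⁻¹ * g * (x⁻¹ * y⁻¹ * x * y) = 1 := by
    intro g
    rw [hc, mul_assoc _ g, hcZ g]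
    group
  refine ⟨?_, hcentral x, hcentral y⟩
  rwa [hc, Ne, commutatorElement_eq_one_iff_commute, Commute.inv_inv_iff,
    ← commutatorElement_eq_one_iff_commute]

end SecondCenter

/-- Let `G` be a nonabelian torsion-free nilpotent group with an
involution `* : G → G` (an anti-automorphism of order 2).  Then `G` contains elements
`x, y` with `(x,y) ≠ 1`, `(x,(x,y)) = (y,(x,y)) = 1`, `x* = x^{±1}` and `y* = y^{±1}`;
i.e. `G` contains a `*`-invariant subgroup isomorphic to the discrete Heisenberg group
on which `*` restricts to one of the three main involutions.
(Here `(x,y) = x⁻¹y⁻¹xy` denotes the group commutator.) -/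
theorem torsion_free_nilpotent_group_involution_heisenberg_pair
    (G : Type) [Group G] [Group.IsNilpotent G]
    (htf : ∀ g : G, g ≠ 1 → ¬IsOfFinOrder g)
    (hna : ∃ a b : G, a * b ≠ b * a)
    (σ : G → G)
    (hanti : ∀ a b : G, σ (a * b) = σ b * σ a)
    (hinv : ∀ a : G, σ (σ a) = a) :
    ∃ x y : G,
      x⁻¹ * y⁻¹ * x * y ≠ 1 ∧
      x⁻¹ * (x⁻¹ * y⁻¹ * x * y)⁻¹ * x * (x⁻¹ * y⁻¹ * x * y) = 1 ∧
      y⁻¹ * (x⁻¹ * y⁻¹ * x * y)⁻¹ * y * (x⁻¹ * y⁻¹ * x * y) = 1 ∧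
      (σ x = x ∨ σ x = x⁻¹) ∧ (σ y = y ∨ σ y = y⁻¹) := by
  let τ := mulAutOfAntiInvolution σ hanti hinv
  have hτ : Function.Involutive τ := mulAutOfAntiInvolution_involutive
  have : IsMulTorsionFree (Subgroup.center G) := isMulTorsionFree_center htf
  obtain ⟨x₀, hx₀, g₀, hg₀⟩ := exists_mem_upperCentralSeries_two_commutatorElement_ne_one hna
  obtain ⟨⟨x, hx⟩, hτx, hxg₀⟩ := exists_map_eq_self_or_inv_and_ne_one
    (τ := (τ.restrictCharacteristic (Subgroup.upperCentralSeries G 2)).toMonoidHom)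
    (fun z => Subtype.ext (hτ z)) (commutatorLeftHom g₀) (g := ⟨x₀, hx₀⟩)
    (by simpa [Subtype.ext_iff] using hg₀)
  obtain ⟨y, hτy, hxy⟩ := exists_map_eq_self_or_inv_and_ne_one (τ := τ.toMonoidHom) hτ
    (commutatorRightHom hx) (g := g₀) (by simpa [Subtype.ext_iff] using hxg₀)
  have hσ : ∀ z, τ z = z ∨ τ z = z⁻¹ → σ z = z ∨ σ z = z⁻¹ := fun z hz => by
    rwa [show τ z = (σ z)⁻¹ from mulAutOfAntiInvolution_apply z, inv_eq_iff_eq_inv, inv_inj,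
      or_comm] at hz
  obtain ⟨hne, hxc, hyc⟩ := heisenberg_relations_of_mem_upperCentralSeries_two hx
    (by simpa [Subtype.ext_iff] using hxy)
  exact ⟨x, y, hne, hxc, hyc, hσ x (by simpa [Subtype.ext_iff] using hτx), hσ y hτy⟩
end
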